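/- arXiv:2006.07706 — 7 statements merged into one kernel-verified Lean document; each statement's English description precedes it below -/
import Mathlib

section
/- The quotient space (List Bool × Bool × [0,1])/∼₁, equipped with the quotient topology, is homeomorphic to the half-line [0,∞); moreover the depth function (w,d,α) ↦ |w| + α descends to such a homeomorphism. (This is the paper's assertion that gluing, at every vertex v of the infinite rooted binary tree, the leftmost descending ray [v, vLLL…) to the rightmost descending ray [v, vRRR…) by the depth-preserving map collapses the entire tree to a copy of [0,∞).) -/
/-!
STATEMENT 0: The quotient of the infinite rooted binary tree obtained by gluing, at
every vertex `v`, the leftmost descending ray `[v, vLLL…)` to the rightmost descending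
ray `[v, vRRR…)` by the depth-preserving map is homeomorphic to `[0,∞)`, and the depth
function `(w,d,α) ↦ |w| + α` descends to such a homeomorphism.
-/

open unitInterval

/-- The words in letters `L = false`, `R = true` are given the discrete topology. -/
instance : TopologicalSpace (List Bool) := ⊥

/-- The generating relation of the infinite rooted binary tree: `(w,d,0) ∼ (w,d',0)`
and `(w,d,1) ∼ (w ++ [d], d', 0)`. -/
inductive TreeRel : (List Bool × Bool × I) → (List Bool × Bool × I) → Prop
  | vertex (w : List Bool) (d d' : Bool) : TreeRel (w, d, 0) (w, d', 0)
  | edge (w : List Bool) (d d' : Bool) : TreeRel (w, d, 1) (w ++ [d], d', 0)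

/-- The depth-preserving gluing of the two extreme descending rays at each vertex:
`(w ++ L^j, L, α) ∼ (w ++ R^j, R, α)`. -/
inductive Glue1 : (List Bool × Bool × I) → (List Bool × Bool × I) → Prop
  | mk (w : List Bool) (j : ℕ) (α : I) :
      Glue1 (w ++ List.replicate j false, false, α) (w ++ List.replicate j true, true, α)

/-- The relation `∼₁`. -/
def Rel1 (a b : List Bool × Bool × I) : Prop := TreeRel a b ∨ Glue1 a b

/-!
Gluing at the vertices along a word `w` moves every point `(w, d, α)` to the point of the same
depth on the leftmost ray `v₀ L L L …`, and on that ray depth determines the point; so depth is a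
continuous bijection from the quotient onto `[0,∞)`. Precomposed with the leftmost ray
`ℕ × [0,1] → Quot Rel1` it becomes `(n, α) ↦ n + α`, a proper and hence quotient map; therefore
the depth map is itself a quotient map, and an injective quotient map is a homeomorphism.
-/

open Topology

namespace Rel1

instance : DiscreteTopology (List Bool) := ⟨rfl⟩

noncomputable def toIci (p : ℕ × I) : Set.Ici (0 : ℝ) :=
  ⟨p.1 + p.2, add_nonneg p.1.cast_nonneg p.2.2.1⟩

lemma continuous_toIci : Continuous toIci :=
  ((continuous_of_discreteTopology.comp continuous_fst).add
    (continuous_subtype_val.comp continuous_snd)).subtype_mk _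

lemma surjective_toIci : Function.Surjective toIci := fun r =>
  ⟨(⌊(r : ℝ)⌋₊, ⟨r - ⌊(r : ℝ)⌋₊, sub_nonneg.2 (Nat.floor_le r.2),
    by linarith [Nat.lt_floor_add_one (r : ℝ)]⟩), Subtype.ext (add_sub_cancel _ _)⟩

lemma isCompact_preimage_toIci {K : Set (Set.Ici (0 : ℝ))} (hK : IsCompact K) :
    IsCompact (toIci ⁻¹' K) := by
  obtain ⟨N, hN⟩ := (hK.image continuous_subtype_val).bddAbove
  refine ((Set.finite_Iic ⌊N⌋₊).isCompact.prod isCompact_univ).of_isClosed_subset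
    (hK.isClosed.preimage continuous_toIci) fun p hp => ⟨?_, trivial⟩
  have hle : (p.1 : ℝ) + p.2 ≤ N := hN ⟨_, hp, rfl⟩
  exact Nat.le_floor (by linarith [p.2.2.1])

lemma isQuotientMap_toIci : IsQuotientMap toIci :=
  (isProperMap_iff_isCompact_preimage.2
    ⟨continuous_toIci, fun _ hK => isCompact_preimage_toIci hK⟩).isClosedMap.isQuotientMap
    continuous_toIci surjective_toIci

lemma eq_or_succ_of_toIci_eq {n m : ℕ} {α β : I} (hnm : n ≤ m)
    (h : toIci (n, α) = toIci (m, β)) :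
    (n = m ∧ α = β) ∨ (m = n + 1 ∧ α = 1 ∧ β = 0) := by
  have h' : (n : ℝ) + α = m + β := congrArg Subtype.val h
  have hm : m ≤ n + 1 := by
    have : (m : ℝ) ≤ n + 1 := by linarith [α.2.2, β.2.1]
    exact_mod_cast this
  obtain rfl | rfl : m = n ∨ m = n + 1 := by omega
  · exact Or.inl ⟨rfl, Subtype.ext (by linarith)⟩
  · push_cast at h'
    have hα : (α : ℝ) = 1 := by linarith [α.2.2, β.2.1]
    have hβ : (β : ℝ) = 0 := by linarith [α.2.2, β.2.1]
    exact Or.inr ⟨rfl, Subtype.ext hα, Subtype.ext hβ⟩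

noncomputable def depth (p : List Bool × Bool × I) : Set.Ici (0 : ℝ) := toIci (p.1.length, p.2.2)

lemma depth_eq_of_rel {a b : List Bool × Bool × I} : Rel1 a b → depth a = depth b
  | .inl (.vertex _ _ _) => rfl
  | .inl (.edge _ _ _) => Subtype.ext (by simp [depth, toIci])
  | .inr (.mk _ _ _) => by simp [depth]

noncomputable def depthQuot : Quot Rel1 → Set.Ici (0 : ℝ) :=
  Quot.lift depth fun _ _ => depth_eq_of_rel

lemma continuous_depthQuot : Continuous depthQuot :=
  continuous_quot_lift _ (continuous_toIci.comp
    ((continuous_of_discreteTopology.comp continuous_fst).prodMk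
      (continuous_snd.comp continuous_snd)))

def leftRay (p : ℕ × I) : Quot Rel1 := Quot.mk Rel1 (List.replicate p.1 false, false, p.2)

lemma continuous_leftRay : Continuous leftRay :=
  continuous_quot_mk.comp
    ((continuous_of_discreteTopology (f := fun n => List.replicate n false)).fst'.prodMk
      (continuous_const.prodMk continuous_snd))

lemma depthQuot_comp_leftRay : depthQuot ∘ leftRay = toIci := by
  funext p
  simp [depthQuot, leftRay, depth]

lemma mk_replicate_eq (u : List Bool) (j : ℕ) (b : Bool) (α : I) :
    Quot.mk Rel1 (u ++ List.replicate j b, b, α) =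
      Quot.mk Rel1 (u ++ List.replicate j false, false, α) := by
  cases b
  · rfl
  · exact (Quot.sound (r := Rel1) (Or.inr (Glue1.mk u j α))).symm

lemma mk_append_replicate (w : List Bool) (k : ℕ) (α : I) :
    Quot.mk Rel1 (w ++ List.replicate k false, false, α) = leftRay (w.length + k, α) := by
  induction w using List.reverseRecOn generalizing k with
  | nil => simp [leftRay]
  | append_singleton u b ih =>
    -- `u ++ [b] ++ Lᵏ ∼ u ++ bᵏ⁺¹ ∼ u ++ Lᵏ⁺¹`, gluing at the vertices `u ++ [b]` and `u`
    rw [← mk_replicate_eq _ k b, List.append_assoc, List.singleton_append,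
      ← List.replicate_succ, mk_replicate_eq, ih]
    simp [Nat.add_right_comm, Nat.add_assoc]

lemma mk_eq_leftRay (w : List Bool) (d : Bool) (α : I) :
    Quot.mk Rel1 (w, d, α) = leftRay (w.length, α) := by
  simpa using (mk_replicate_eq w 0 d α).trans (mk_append_replicate w 0 α)

lemma leftRay_eq_of_toIci_eq {n m : ℕ} {α β : I} (hnm : n ≤ m)
    (h : toIci (n, α) = toIci (m, β)) : leftRay (n, α) = leftRay (m, β) := by
  obtain ⟨rfl, rfl⟩ | ⟨rfl, rfl, rfl⟩ := eq_or_succ_of_toIci_eq hnm h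
  · rfl
  · have := Quot.sound (r := Rel1) (Or.inl (TreeRel.edge (List.replicate n false) false false))
    rwa [← List.replicate_succ'] at this

lemma injective_depthQuot : Function.Injective depthQuot := by
  rintro ⟨w, d, α⟩ ⟨w', d', α'⟩ h
  change toIci (w.length, α) = toIci (w'.length, α') at h
  rw [mk_eq_leftRay, mk_eq_leftRay]
  rcases le_total w.length w'.length with hle | hle
  · exact leftRay_eq_of_toIci_eq hle h
  · exact (leftRay_eq_of_toIci_eq hle h.symm).symm

lemma isHomeomorph_depthQuot : IsHomeomorph depthQuot :=
  isHomeomorph_iff_isQuotientMap_injective.2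
    ⟨.of_comp continuous_leftRay continuous_depthQuot
      (depthQuot_comp_leftRay ▸ isQuotientMap_toIci), injective_depthQuot⟩

end Rel1

theorem statement0 :
    ∃ e : Quot Rel1 ≃ₜ Set.Ici (0 : ℝ),
      ∀ (w : List Bool) (d : Bool) (α : I),
        (e (Quot.mk Rel1 (w, d, α)) : ℝ) = (w.length : ℝ) + (α : ℝ) :=
  ⟨Rel1.isHomeomorph_depthQuot.homeomorph, fun _ _ _ => rfl⟩
end

section
/- For every integer n ≥ 0, the vertex v₀R^nL is ∼₂-equivalent to the vertex v₀L; that is, the points (replicate n R, L, 1) and ([], L, 1) are identified by ∼₂. (This is the paper's claim that under the second gluing the points v₀R^nL are identified for all n ≥ 0.) -/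
/-!
STATEMENT 1: Under the second gluing `∼₂`, the vertices `v₀RⁿL` are identified with
`v₀L` for every `n ≥ 0`; i.e. the points `(replicate n R, L, 1)` and `([], L, 1)` are
identified by `∼₂`.
-/

open unitInterval

/-- The second gluing: at each vertex `v`, glue the segment `[v,vL]` to `[v,vRL]` by the
dilation by a factor of two, and glue the ray `[vL, vLRRR…)` to `[vRL, vRLRRR…)`
isometrically. -/
inductive Glue2 : (List Bool × Bool × I) → (List Bool × Bool × I) → Prop
  | segL (w : List Bool) (α β : I) (hα : (α : ℝ) ≤ 1 / 2) (hβ : (β : ℝ) = 2 * (α : ℝ)) :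
      Glue2 (w, false, α) (w, true, β)
  | segR (w : List Bool) (α β : I) (hα : 1 / 2 ≤ (α : ℝ)) (hβ : (β : ℝ) = 2 * (α : ℝ) - 1) :
      Glue2 (w, false, α) (w ++ [true], false, β)
  | ray (w : List Bool) (j : ℕ) (α : I) :
      Glue2 (w ++ [false] ++ List.replicate j true, true, α)
            (w ++ [true, false] ++ List.replicate j true, true, α)

/-- The relation generating `∼₂`. -/
def Rel2 (a b : List Bool × Bool × I) : Prop := TreeRel a b ∨ Glue2 a b

/-- The dilation of `[v,vL]` onto `[v,vRL]` sends the endpoint `vL` to `vRL`. -/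
theorem quot_mk_append_true_false_one (w : List Bool) :
    Quot.mk Rel2 (w ++ [true], false, 1) = Quot.mk Rel2 (w, false, 1) :=
  (Quot.sound (r := Rel2) <| Or.inr <| Glue2.segR w 1 1 (by norm_num) (by norm_num)).symm

theorem statement1 (n : ℕ) :
    Quot.mk Rel2 (List.replicate n true, false, 1) = Quot.mk Rel2 ([], false, 1) := by
  induction n with
  | zero => rfl
  | succ n ih => rw [List.replicate_succ', quot_mk_append_true_false_one, ih]
end

section
/- Every ∼₂-equivalence class contains exactly one point of one of the following forms: the point at depth-distance s along the all-R descending ray from the vertex u·L·L for some word u ∈ W and some real s ≥ 0; the point at depth-distance s along the all-R descending ray from the vertex v₀L for some real s ≥ 0; or the point at depth-distance s along the all-R descending ray from the root v₀ for some real s ≥ 0. (In the paper's notation: each class has a canonical representative of the form v₀{L,R}^k LLR^s, v₀LR^s, or v₀R^s with s ≥ 0.) -/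
/-!
STATEMENT 2: Every `∼₂`-equivalence class contains exactly one point of one of the forms
`v₀{L,R}^k LL Rˢ`, `v₀L Rˢ`, or `v₀ Rˢ` with `s ≥ 0` (the point at depth-distance `s`
along the all-`R` descending ray from the indicated vertex).
-/

open unitInterval

open unitInterval

/-- The point at depth-distance `s ≥ 0` along the all-`R` descending ray from the
vertex `v`: the class of `(v ++ R^⌊s⌋, R, s - ⌊s⌋)`. -/
noncomputable def rayPoint (v : List Bool) (s : ℝ) : List Bool × Bool × I :=
  (v ++ List.replicate (⌊s⌋.toNat) true, true,
    ⟨Int.fract s, ⟨Int.fract_nonneg s, (Int.fract_lt_one s).le⟩⟩)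

/-- The set of canonical points: `v₀{L,R}^k LL Rˢ`, `v₀L Rˢ`, or `v₀ Rˢ` with `s ≥ 0`. -/
def Canon : Set (List Bool × Bool × I) :=
  {q | (∃ u : List Bool, ∃ s : ℝ, 0 ≤ s ∧ q = rayPoint (u ++ [false, false]) s) ∨
       (∃ s : ℝ, 0 ≤ s ∧ q = rayPoint [false] s) ∨
       (∃ s : ℝ, 0 ≤ s ∧ q = rayPoint [] s)}




/-! ### Word reduction -/

def dropT : List Bool → List Bool
  | true :: l => dropT l
  | l => l

def redRev : List Bool → List Bool
  | [] => []
  | true :: l => true :: redRev l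
  | false :: l => false :: dropT l

def red (W : List Bool) : List Bool := (redRev W.reverse).reverse

@[simp] lemma dropT_nil : dropT [] = [] := rfl
@[simp] lemma dropT_true (l : List Bool) : dropT (true :: l) = dropT l := rfl
@[simp] lemma dropT_false (l : List Bool) : dropT (false :: l) = false :: l := rfl

@[simp] lemma redRev_nil : redRev [] = [] := rfl
@[simp] lemma redRev_true (l : List Bool) : redRev (true :: l) = true :: redRev l := rfl
@[simp] lemma redRev_false (l : List Bool) : redRev (false :: l) = false :: dropT l := rfl

lemma redRev_replicate_append (k : ℕ) (l : List Bool) :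
    redRev (List.replicate k true ++ l) = List.replicate k true ++ redRev l := by
  induction k with
  | zero => simp
  | succ n ih => simp [List.replicate_succ, ih]

lemma redRev_replicate (k : ℕ) : redRev (List.replicate k true) = List.replicate k true := by
  simpa using redRev_replicate_append k []

lemma red_ray (u : List Bool) (j : ℕ) :
    red (u ++ [false] ++ List.replicate j true) = red (u ++ [true, false] ++ List.replicate j true) := by
  unfold red
  have h1 : (u ++ [false] ++ List.replicate j true).reverse
      = List.replicate j true ++ (false :: u.reverse) := by
    simp [List.reverse_append]
  have h2 : (u ++ [true, false] ++ List.replicate j true).reverse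
      = List.replicate j true ++ (false :: true :: u.reverse) := by
    simp [List.reverse_append]
  rw [h1, h2, redRev_replicate_append, redRev_replicate_append]
  simp

lemma dropT_shape (l : List Bool) : dropT l = [] ∨ ∃ m, dropT l = false :: m := by
  induction l with
  | nil => left; rfl
  | cons a l ih => cases a <;> simp [ih]

lemma redRev_shape (r : List Bool) :
    (∃ k, redRev r = List.replicate k true) ∨
    (∃ k, redRev r = List.replicate k true ++ [false]) ∨
    (∃ k m, redRev r = List.replicate k true ++ [false, false] ++ m) := by
  induction r with
  | nil => left; exact ⟨0, rfl⟩
  | cons a l ih =>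
    cases a
    · rcases dropT_shape l with h | ⟨m, h⟩
      · right; left; exact ⟨0, by simp [h]⟩
      · right; right; exact ⟨0, m, by simp [h]⟩
    · rcases ih with ⟨k, h⟩ | ⟨k, h⟩ | ⟨k, m, h⟩
      · left; exact ⟨k + 1, by simp [h, List.replicate_succ]⟩
      · right; left; exact ⟨k + 1, by simp [h, List.replicate_succ]⟩
      · right; right; exact ⟨k + 1, m, by simp [h, List.replicate_succ]⟩

lemma redRev_dichotomy (r : List Bool) :
    redRev r = r ∨ ∃ j v, r = List.replicate j true ++ [false, true] ++ v := by
  induction r with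
  | nil => left; rfl
  | cons a l ih =>
    cases a
    · cases l with
      | nil => left; rfl
      | cons b m =>
        cases b
        · left; rfl
        · right; exact ⟨0, m, rfl⟩
    · rcases ih with h | ⟨j, v, h⟩
      · left; simp [h]
      · right; exact ⟨j + 1, v, by simp [h, List.replicate_succ]⟩

/-- fixed points of red -/
lemma red_fix_of_redRev {W : List Bool} (h : redRev W.reverse = W.reverse) : red W = W := by
  unfold red; rw [h, List.reverse_reverse]

lemma red_replicate (k : ℕ) : red (List.replicate k true) = List.replicate k true :=
  red_fix_of_redRev (by simp [redRev_replicate])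

lemma red_F (k : ℕ) : red ([false] ++ List.replicate k true) = [false] ++ List.replicate k true :=
  red_fix_of_redRev (by
    rw [List.reverse_append, List.reverse_replicate]
    rw [redRev_replicate_append]
    rfl)

lemma red_FF (u : List Bool) (k : ℕ) :
    red ((u ++ [false, false]) ++ List.replicate k true) = (u ++ [false, false]) ++ List.replicate k true :=
  red_fix_of_redRev (by
    have : ((u ++ [false, false]) ++ List.replicate k true).reverse
        = List.replicate k true ++ (false :: false :: u.reverse) := by
      simp [List.reverse_append]
    rw [this, redRev_replicate_append]
    rfl)


open scoped Classical in
noncomputable def jsteps (t : ℝ) : ℕ :=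
  if h : ∃ j : ℕ, 1 ≤ 2 ^ (j + 1) * t then Nat.find h else 0

lemma jsteps_exists {t : ℝ} (ht : 0 < t) : ∃ j : ℕ, 1 ≤ 2 ^ (j + 1) * t := by
  obtain ⟨n, hn⟩ := pow_unbounded_of_one_lt (1 / t) (one_lt_two (α := ℝ))
  refine ⟨n, ?_⟩
  have h1 : 1 / t < 2 ^ (n + 1) := lt_of_lt_of_le hn (by
    apply pow_le_pow_right₀ (by norm_num) (Nat.le_succ n))
  rw [div_lt_iff₀ ht] at h1
  nlinarith

lemma jsteps_spec {t : ℝ} (ht : 0 < t) : 1 ≤ 2 ^ (jsteps t + 1) * t := by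
  classical
  rw [jsteps, dif_pos (jsteps_exists ht)]
  exact Nat.find_spec (jsteps_exists ht)

lemma jsteps_min {t : ℝ} (ht : 0 < t) {i : ℕ} (h : i < jsteps t) : 2 ^ (i + 1) * t < 1 := by
  classical
  rw [jsteps, dif_pos (jsteps_exists ht)] at h
  exact not_le.mp (Nat.find_min (jsteps_exists ht) h)

lemma jsteps_eq {t : ℝ} {j : ℕ} (h1 : 1 ≤ 2 ^ (j + 1) * t)
    (h2 : ∀ i < j, 2 ^ (i + 1) * t < 1) : jsteps t = j := by
  classical
  rw [jsteps, dif_pos ⟨j, h1⟩, Nat.find_eq_iff]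
  exact ⟨h1, fun m hm => not_le.mpr (h2 m hm)⟩

lemma jsteps_one : jsteps (1 : ℝ) = 0 :=
  jsteps_eq (by norm_num) (by intro i hi; omega)

lemma jsteps_double {t : ℝ} (ht : 0 < t) (h2 : 2 * t < 1) :
    jsteps t = jsteps (2 * t) + 1 := by
  have ht2 : (0:ℝ) < 2 * t := by linarith
  refine jsteps_eq ?_ ?_
  · have := jsteps_spec ht2
    calc (1:ℝ) ≤ 2 ^ (jsteps (2*t) + 1) * (2 * t) := this
    _ = 2 ^ (jsteps (2*t) + 1 + 1) * t := by ring
  · intro i hi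
    cases i with
    | zero => simpa using h2
    | succ i' =>
      have := jsteps_min ht2 (show i' < jsteps (2*t) by omega)
      calc 2 ^ (i' + 1 + 1) * t = 2 ^ (i' + 1) * (2 * t) := by ring
      _ < 1 := this

lemma gamma_le_one {α : ℝ} (h1 : α < 1) :
    2 ^ (jsteps (1 - α) + 1) * (α - 1) + 2 ≤ 1 := by
  have ht : (0:ℝ) < 1 - α := by linarith
  have := jsteps_spec ht
  have h : 2 ^ (jsteps (1 - α) + 1) * (1 - α) = -(2 ^ (jsteps (1 - α) + 1) * (α - 1)) := by ring
  linarith [h ▸ this]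

lemma gamma_nonneg {α : ℝ} (h0 : 0 ≤ α) (h1 : α < 1) :
    0 ≤ 2 ^ (jsteps (1 - α) + 1) * (α - 1) + 2 := by
  have ht : (0:ℝ) < 1 - α := by linarith
  cases hj : jsteps (1 - α) with
  | zero => norm_num; linarith
  | succ i =>
    have hm := jsteps_min ht (show i < jsteps (1 - α) by omega)
    have : 2 ^ (i + 1 + 1) * (1 - α) = 2 * (2 ^ (i + 1) * (1 - α)) := by ring
    nlinarith

noncomputable def NT (w : List Bool) (β : ℝ) : List Bool × Bool × I :=
  if β = 1 then (red (w ++ [true]), true, Set.projIcc 0 1 zero_le_one 0)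
  else (red w, true, Set.projIcc 0 1 zero_le_one β)

noncomputable def Nf (p : List Bool × Bool × I) : List Bool × Bool × I :=
  if p.2.1 = true then NT p.1 (p.2.2 : ℝ)
  else if (p.2.2 : ℝ) = 1 then NT (p.1 ++ [false]) 0
  else NT (p.1 ++ List.replicate (jsteps (1 - (p.2.2 : ℝ))) true)
          (2 ^ (jsteps (1 - (p.2.2 : ℝ)) + 1) * ((p.2.2 : ℝ) - 1) + 2)

lemma NT_one (w : List Bool) : NT w 1 = NT (w ++ [true]) 0 := by
  simp [NT]

lemma Nf_true (w : List Bool) (α : I) : Nf (w, true, α) = NT w (α : ℝ) := by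
  simp [Nf]

lemma Nf_false_one (w : List Bool) (α : I) (h : (α : ℝ) = 1) :
    Nf (w, false, α) = NT (w ++ [false]) 0 := by
  simp [Nf, h]

lemma Nf_false_lt (w : List Bool) (α : I) (h : (α : ℝ) ≠ 1) :
    Nf (w, false, α) = NT (w ++ List.replicate (jsteps (1 - (α : ℝ))) true)
      (2 ^ (jsteps (1 - (α : ℝ)) + 1) * ((α : ℝ) - 1) + 2) := by
  simp [Nf, h]

lemma triple_eq {w w' : List Bool} {d : Bool} {x y : I} (hw : w = w') (hxy : (x : ℝ) = (y : ℝ)) :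
    ((w, d, x) : List Bool × Bool × I) = (w', d, y) := by
  subst hw; rw [Subtype.ext hxy]

lemma Nf_vertex (w : List Bool) (α : I) (h : (α : ℝ) = 0) (d : Bool) :
    Nf (w, d, α) = NT w 0 := by
  cases d
  · rw [Nf_false_lt w α (by rw [h]; norm_num), h]
    rw [show (1:ℝ) - 0 = 1 by norm_num, jsteps_one]
    norm_num
  · rw [Nf_true, h]

/-! ### relations up to Quot -/

lemma relRed_aux : ∀ n : ℕ, ∀ W : List Bool, W.length ≤ n → ∀ β : I,
    Quot.mk Rel2 (red W, true, β) = Quot.mk Rel2 (W, true, β) := by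
  intro n
  induction n with
  | zero =>
    intro W hW β
    have : W = [] := List.length_eq_zero_iff.mp (Nat.le_zero.mp hW)
    subst this
    rfl
  | succ n ih =>
    intro W hW β
    rcases redRev_dichotomy W.reverse with h | ⟨j, v, h⟩
    · rw [red_fix_of_redRev h]
    · have hW' : W = v.reverse ++ [true, false] ++ List.replicate j true := by
        have h2 := congrArg List.reverse h
        rw [List.reverse_reverse] at h2
        rw [h2]; simp [List.reverse_append]
      have hray : Quot.mk Rel2 ((v.reverse ++ [false] ++ List.replicate j true, true, β) :
            List Bool × Bool × I)
          = Quot.mk Rel2 (v.reverse ++ [true, false] ++ List.replicate j true, true, β) :=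
        Quot.sound (Or.inr (Glue2.ray v.reverse j β))
      rw [hW', ← hray, ← red_ray v.reverse j]
      apply ih
      have hlw : W.length = v.length + 2 + j := by
        rw [hW']; simp; omega
      have hlen : (v.reverse ++ [false] ++ List.replicate j true).length = v.length + 1 + j := by
        simp; omega
      omega

lemma relRed (W : List Bool) (β : I) :
    Quot.mk Rel2 (red W, true, β) = Quot.mk Rel2 (W, true, β) :=
  relRed_aux W.length W le_rfl β

lemma relNT0 (w : List Bool) (β : ℝ) (h0 : 0 ≤ β) (h1 : β < 1) :
    Quot.mk Rel2 (NT w β) = Quot.mk Rel2 (w, true, ⟨β, h0, h1.le⟩) := by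
  rw [NT, if_neg (ne_of_lt h1)]
  rw [Set.projIcc_of_mem _ (Set.mem_Icc.mpr ⟨h0, h1.le⟩)]
  exact relRed w ⟨β, h0, h1.le⟩

lemma relNT (w : List Bool) (β : ℝ) (h0 : 0 ≤ β) (h1 : β ≤ 1) :
    Quot.mk Rel2 (NT w β) = Quot.mk Rel2 (w, true, ⟨β, h0, h1⟩) := by
  rcases eq_or_lt_of_le h1 with he | hl
  · subst he
    rw [NT_one, relNT0 (w ++ [true]) 0 le_rfl one_pos]
    have hedge : Quot.mk Rel2 ((w, true, (1:I)) : List Bool × Bool × I)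
        = Quot.mk Rel2 (w ++ [true], true, (0:I)) :=
      Quot.sound (Or.inl (TreeRel.edge w true true))
    calc Quot.mk Rel2 ((w ++ [true], true, (⟨(0:ℝ), le_rfl, zero_le_one⟩ : I)) :
            List Bool × Bool × I)
        = Quot.mk Rel2 (w ++ [true], true, (0:I)) := by
          exact congrArg _ (triple_eq rfl (by simp))
      _ = Quot.mk Rel2 (w, true, (1:I)) := hedge.symm
      _ = Quot.mk Rel2 (w, true, ⟨1, h0, le_rfl⟩) := congrArg _ (triple_eq rfl (by simp))
  · exact relNT0 w β h0 hl

lemma relChain : ∀ j : ℕ, ∀ (w : List Bool) (α : ℝ) (h0 : 0 ≤ α) (h1 : α < 1),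
    jsteps (1 - α) = j →
    ∀ (g0 : 0 ≤ 2 ^ j * (α - 1) + 1) (g1 : 2 ^ j * (α - 1) + 1 ≤ 1),
    Quot.mk Rel2 ((w, false, (⟨α, h0, h1.le⟩ : I)) : List Bool × Bool × I)
      = Quot.mk Rel2 (w ++ List.replicate j true, false, ⟨2 ^ j * (α - 1) + 1, g0, g1⟩) := by
  intro j
  induction j with
  | zero =>
    intro w α h0 h1 hj g0 g1
    exact congrArg _ (triple_eq (by simp) (by norm_num)).symm
  | succ j ih =>
    intro w α h0 h1 hj g0 g1
    have ht : (0:ℝ) < 1 - α := by linarith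
    have hhalf : 1/2 < α := by
      have hm := jsteps_min ht (show 0 < jsteps (1 - α) by omega)
      norm_num at hm
      linarith
    have hb0 : (0:ℝ) ≤ 2*α - 1 := by linarith
    have hb1 : 2*α - 1 < 1 := by linarith
    have hstep : Quot.mk Rel2 ((w, false, (⟨α, h0, h1.le⟩ : I)) : List Bool × Bool × I)
        = Quot.mk Rel2 (w ++ [true], false, ⟨2*α - 1, hb0, hb1.le⟩) :=
      Quot.sound (Or.inr (Glue2.segR w ⟨α, h0, h1.le⟩ ⟨2*α - 1, hb0, hb1.le⟩ hhalf.le rfl))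
    have hj' : jsteps (1 - (2*α - 1)) = j := by
      have hd := jsteps_double ht (show 2*(1 - α) < 1 by linarith)
      have he : (1 - (2*α - 1)) = 2*(1 - α) := by ring
      rw [he]; omega
    have g0' : 0 ≤ 2 ^ j * ((2*α - 1) - 1) + 1 := by
      have he : 2 ^ j * ((2*α - 1) - 1) + 1 = 2 ^ (j+1) * (α - 1) + 1 := by ring
      rw [he]; exact g0
    have g1' : 2 ^ j * ((2*α - 1) - 1) + 1 ≤ 1 := by
      have he : 2 ^ j * ((2*α - 1) - 1) + 1 = 2 ^ (j+1) * (α - 1) + 1 := by ring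
      rw [he]; exact g1
    rw [hstep, ih (w ++ [true]) (2*α - 1) hb0 hb1 hj' g0' g1']
    refine congrArg _ (triple_eq ?_ (by push_cast; ring))
    simp [List.replicate_succ]

lemma Nf_rel (p : List Bool × Bool × I) : Quot.mk Rel2 (Nf p) = Quot.mk Rel2 p := by
  obtain ⟨w, d, α⟩ := p
  cases d
  · by_cases h : (α : ℝ) = 1
    · rw [Nf_false_one w α h, relNT0 (w ++ [false]) 0 le_rfl one_pos]
      have hedge : Quot.mk Rel2 ((w, false, (1:I)) : List Bool × Bool × I)
          = Quot.mk Rel2 (w ++ [false], true, (0:I)) :=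
        Quot.sound (Or.inl (TreeRel.edge w false true))
      calc Quot.mk Rel2 ((w ++ [false], true, (⟨(0:ℝ), le_rfl, zero_le_one⟩ : I)) :
              List Bool × Bool × I)
          = Quot.mk Rel2 (w ++ [false], true, (0:I)) := congrArg _ (triple_eq rfl (by simp))
        _ = Quot.mk Rel2 (w, false, (1:I)) := hedge.symm
        _ = Quot.mk Rel2 (w, false, α) := congrArg _ (triple_eq rfl (by simp [h]))
    · have h1 : (α : ℝ) < 1 := lt_of_le_of_ne α.2.2 h
      rw [Nf_false_lt w α h]
      have hγ0 := gamma_nonneg α.2.1 h1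
      have hγ1 := gamma_le_one h1
      rw [relNT (w ++ List.replicate (jsteps (1 - (α:ℝ))) true) _ hγ0 hγ1]
      have hαj0 : 0 ≤ 2 ^ (jsteps (1 - (α:ℝ))) * ((α:ℝ) - 1) + 1 := by
        have he : 2 ^ (jsteps (1 - (α:ℝ)) + 1) * ((α:ℝ) - 1) + 2
            = 2 * (2 ^ (jsteps (1 - (α:ℝ))) * ((α:ℝ) - 1) + 1) := by ring
        rw [he] at hγ0; linarith
      have hαjh : 2 ^ (jsteps (1 - (α:ℝ))) * ((α:ℝ) - 1) + 1 ≤ 1/2 := by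
        have he : 2 ^ (jsteps (1 - (α:ℝ)) + 1) * ((α:ℝ) - 1) + 2
            = 2 * (2 ^ (jsteps (1 - (α:ℝ))) * ((α:ℝ) - 1) + 1) := by ring
        rw [he] at hγ1; linarith
      have hαj1 : 2 ^ (jsteps (1 - (α:ℝ))) * ((α:ℝ) - 1) + 1 ≤ 1 := by linarith
      have hseg : Quot.mk Rel2 ((w ++ List.replicate (jsteps (1 - (α:ℝ))) true, false,
              (⟨2 ^ (jsteps (1 - (α:ℝ))) * ((α:ℝ) - 1) + 1, hαj0, hαj1⟩ : I)) :
            List Bool × Bool × I)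
          = Quot.mk Rel2 (w ++ List.replicate (jsteps (1 - (α:ℝ))) true, true,
              ⟨2 ^ (jsteps (1 - (α:ℝ)) + 1) * ((α:ℝ) - 1) + 2, hγ0, hγ1⟩) :=
        Quot.sound (Or.inr (Glue2.segL _ _ _ hαjh (by push_cast; ring)))
      rw [← hseg, ← relChain (jsteps (1 - (α:ℝ))) w (α:ℝ) α.2.1 h1 rfl hαj0 hαj1]
  · rw [Nf_true, relNT w (α:ℝ) α.2.1 α.2.2]

/-! ### well-definedness -/

lemma Nf_sound : ∀ a b, Rel2 a b → Nf a = Nf b := by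
  rintro a b (h | h)
  · cases h with
    | vertex w d d' =>
      rw [Nf_vertex w 0 (by simp) d, Nf_vertex w 0 (by simp) d']
    | edge w d d' =>
      have hl : Nf (w, d, (1:I)) = NT (w ++ [d]) 0 := by
        cases d
        · exact Nf_false_one w 1 (by simp)
        · rw [Nf_true, Set.Icc.coe_one, NT_one]
      rw [hl, Nf_vertex (w ++ [d]) 0 (by simp) d']
  · cases h with
    | segL w α β hα hβ =>
      rw [Nf_true]
      rw [Nf_false_lt w α (by intro hc; rw [hc] at hα; norm_num at hα)]
      have hjs : jsteps (1 - (α:ℝ)) = 0 :=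
        jsteps_eq (by norm_num; linarith) (by intro i hi; exact absurd hi (Nat.not_lt_zero i))
      rw [hjs]
      simp only [List.replicate_zero, List.append_nil]
      congr 1
      rw [hβ]; ring
    | segR w α β hα hβ =>
      by_cases hA : (α:ℝ) = 1
      · have hB : (β:ℝ) = 1 := by rw [hβ, hA]; norm_num
        rw [Nf_false_one w α hA, Nf_false_one (w ++ [true]) β hB]
        rw [NT, NT]
        simp only [if_neg (by norm_num : (0:ℝ) = 1 → False)]
        have hred := red_ray w 0
        simp only [List.replicate_zero, List.append_nil] at hred
        have : (w ++ [true]) ++ [false] = w ++ [true, false] := by simp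
        rw [this, hred]
      · have h1 : (α:ℝ) < 1 := lt_of_le_of_ne α.2.2 hA
        have hB1 : (β:ℝ) < 1 := by rw [hβ]; linarith
        rw [Nf_false_lt w α hA, Nf_false_lt (w ++ [true]) β (ne_of_lt hB1)]
        by_cases hH : (α:ℝ) = 1/2
        · have hB0 : (β:ℝ) = 0 := by rw [hβ, hH]; norm_num
          rw [hH, hB0]
          have hj1 : jsteps (1 - (1/2:ℝ)) = 0 :=
            jsteps_eq (by norm_num) (by intro i hi; exact absurd hi (Nat.not_lt_zero i))
          have hj2 : jsteps (1 - (0:ℝ)) = 0 := by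
            rw [show (1:ℝ) - 0 = 1 by norm_num, jsteps_one]
          rw [hj1, hj2]
          simp only [List.replicate_zero, List.append_nil]
          rw [show 2 ^ (0+1) * ((1/2:ℝ) - 1) + 2 = 1 by norm_num,
              show 2 ^ (0+1) * ((0:ℝ) - 1) + 2 = 0 by norm_num, NT_one]
        · have hH2 : 1/2 < (α:ℝ) := lt_of_le_of_ne hα (Ne.symm hH)
          have ht : (0:ℝ) < 1 - (α:ℝ) := by linarith
          have hd : jsteps (1 - (α:ℝ)) = jsteps (2*(1 - (α:ℝ))) + 1 :=
            jsteps_double ht (by linarith)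
          have h2t : (1 - (β:ℝ)) = 2*(1 - (α:ℝ)) := by rw [hβ]; ring
          rw [h2t, hd]
          congr 1
          · simp [List.replicate_succ]
          · rw [hβ]; ring
    | ray w j α =>
      rw [Nf_true, Nf_true]
      by_cases h : (α:ℝ) = 1
      · rw [h, NT_one, NT_one, NT, NT]
        simp only [if_neg (by norm_num : (0:ℝ) = 1 → False)]
        have e1 : (w ++ [false] ++ List.replicate j true) ++ [true]
            = w ++ [false] ++ List.replicate (j+1) true := by
          simp [List.replicate_succ' , List.append_assoc]
        have e2 : (w ++ [true, false] ++ List.replicate j true) ++ [true]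
            = w ++ [true, false] ++ List.replicate (j+1) true := by
          simp [List.replicate_succ', List.append_assoc]
        rw [e1, e2, red_ray w (j+1)]
      · rw [NT, NT]
        simp only [if_neg h]
        rw [red_ray w j]

/-! ### membership in Canon -/

lemma floor_toNat_add (k : ℕ) (β : ℝ) (h0 : 0 ≤ β) (h1 : β < 1) :
    (⌊(k:ℝ) + β⌋).toNat = k := by
  have hc : ((k:ℝ)) = ((k:ℤ):ℝ) := by push_cast; ring
  rw [hc, Int.floor_intCast_add, Int.floor_eq_zero_iff.mpr ⟨h0, h1⟩, add_zero, Int.toNat_natCast]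

lemma fract_add (k : ℕ) (β : ℝ) (h0 : 0 ≤ β) (h1 : β < 1) :
    Int.fract ((k:ℝ) + β) = β := by
  have hc : ((k:ℝ)) = ((k:ℤ):ℝ) := by push_cast; ring
  rw [hc, Int.fract_intCast_add, Int.fract_eq_self.mpr ⟨h0, h1⟩]

lemma NT_mem (w : List Bool) (β : ℝ) (h0 : 0 ≤ β) (h1 : β < 1) : NT w β ∈ Canon := by
  rw [NT, if_neg (ne_of_lt h1)]
  have hs : (0:ℝ) ≤ β := h0
  rcases redRev_shape w.reverse with ⟨k, h⟩ | ⟨k, h⟩ | ⟨k, m, h⟩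
  · right; right
    refine ⟨(k:ℝ) + β, by positivity, ?_⟩
    rw [rayPoint, floor_toNat_add k β h0 h1]
    refine triple_eq ?_ ?_
    · rw [red, h, List.reverse_replicate]; simp
    · rw [Set.projIcc_of_mem _ (Set.mem_Icc.mpr ⟨h0, h1.le⟩)]
      exact (fract_add k β h0 h1).symm
  · right; left
    refine ⟨(k:ℝ) + β, by positivity, ?_⟩
    rw [rayPoint, floor_toNat_add k β h0 h1]
    refine triple_eq ?_ ?_
    · rw [red, h]; simp
    · rw [Set.projIcc_of_mem _ (Set.mem_Icc.mpr ⟨h0, h1.le⟩)]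
      exact (fract_add k β h0 h1).symm
  · left
    refine ⟨m.reverse, (k:ℝ) + β, by positivity, ?_⟩
    rw [rayPoint, floor_toNat_add k β h0 h1]
    refine triple_eq ?_ ?_
    · rw [red, h]; simp
    · rw [Set.projIcc_of_mem _ (Set.mem_Icc.mpr ⟨h0, h1.le⟩)]
      exact (fract_add k β h0 h1).symm

lemma NT_mem_all (w : List Bool) (β : ℝ) (h0 : 0 ≤ β) (h1 : β ≤ 1) : NT w β ∈ Canon := by
  rcases eq_or_lt_of_le h1 with he | hl
  · subst he; rw [NT_one]; exact NT_mem _ 0 le_rfl one_pos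
  · exact NT_mem w β h0 hl

lemma Nf_mem (p : List Bool × Bool × I) : Nf p ∈ Canon := by
  obtain ⟨w, d, α⟩ := p
  cases d
  · by_cases h : (α:ℝ) = 1
    · rw [Nf_false_one w α h]; exact NT_mem _ 0 le_rfl one_pos
    · have h1 : (α:ℝ) < 1 := lt_of_le_of_ne α.2.2 h
      rw [Nf_false_lt w α h]
      exact NT_mem_all _ _ (gamma_nonneg α.2.1 h1) (gamma_le_one h1)
  · rw [Nf_true]
    exact NT_mem_all w (α:ℝ) α.2.1 α.2.2

/-! ### Nf fixes Canon -/

lemma Nf_rayPoint (v : List Bool) (s : ℝ) (hred : red (v ++ List.replicate (⌊s⌋.toNat) true)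
    = v ++ List.replicate (⌊s⌋.toNat) true) : Nf (rayPoint v s) = rayPoint v s := by
  rw [rayPoint, Nf_true]
  rw [NT, if_neg (show Int.fract s ≠ 1 from (Int.fract_lt_one s).ne)]
  refine triple_eq hred ?_
  rw [Set.projIcc_of_mem _ (Set.mem_Icc.mpr ⟨Int.fract_nonneg s, (Int.fract_lt_one s).le⟩)]

lemma Nf_canon (q : List Bool × Bool × I) (hq : q ∈ Canon) : Nf q = q := by
  rcases hq with ⟨u, s, _, rfl⟩ | ⟨s, _, rfl⟩ | ⟨s, _, rfl⟩
  · exact Nf_rayPoint _ s (red_FF u _)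
  · exact Nf_rayPoint _ s (red_F _)
  · exact Nf_rayPoint _ s (by rw [List.nil_append]; exact red_replicate _)

theorem statement2 (p : List Bool × Bool × I) :
    ∃! q : List Bool × Bool × I, q ∈ Canon ∧ Quot.mk Rel2 q = Quot.mk Rel2 p := by
  refine ⟨Nf p, ⟨Nf_mem p, Nf_rel p⟩, ?_⟩
  rintro q ⟨hq, hrel⟩
  have h1 : Nf q = Nf p := by
    calc Nf q = Quot.lift Nf Nf_sound (Quot.mk Rel2 q) := rfl
      _ = Quot.lift Nf Nf_sound (Quot.mk Rel2 p) := by rw [hrel]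
      _ = Nf p := rfl
  rw [← Nf_canon q hq, h1]
end

section
/- The three vertices v₀LL, v₀RLL, and v₀RRLL of the infinite rooted binary tree are pairwise non-equivalent under ∼₂; that is, the points ([L], L, 1), ([R,L], L, 1), and ([R,R,L], L, 1) lie in three distinct ∼₂-equivalence classes. (This is the paper's claim that the classes labelled 2, 2′, 2″ are distinct, so that the quotient is not homeomorphic to a ray.) -/
/-!
STATEMENT 3: The three vertices `v₀LL`, `v₀RLL`, and `v₀RRLL` of the infinite rooted
binary tree are pairwise non-equivalent under `∼₂`: the points `([L], L, 1)`,
`([R,L], L, 1)`, `([R,R,L], L, 1)` lie in three distinct `∼₂`-classes.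
-/

open unitInterval

open unitInterval

/-- Strip the run of `true`s immediately after the first `false`. -/
def stripAux : List Bool → List Bool
  | [] => []
  | true :: t => true :: stripAux t
  | false :: t => false :: t.dropWhile (· == true)

/-- Normal form of a vertex word: strip the run of `R`s immediately before the last `L`. -/
def NF (w : List Bool) : List Bool := (stripAux w.reverse).reverse

lemma stripAux_replicate (j : ℕ) (t : List Bool) :
    stripAux (List.replicate j true ++ false :: t)
      = List.replicate j true ++ false :: t.dropWhile (· == true) := by
  induction j with
  | zero => simp [stripAux]
  | succ n ih => simp [List.replicate_succ, stripAux, ih]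

lemma NF_key (u : List Bool) (j : ℕ) :
    NF (u ++ [false] ++ List.replicate j true)
      = NF (u ++ [true, false] ++ List.replicate j true) := by
  unfold NF
  have h1 : (u ++ [false] ++ List.replicate j true).reverse
      = List.replicate j true ++ false :: u.reverse := by
    simp [List.reverse_append]
  have h2 : (u ++ [true, false] ++ List.replicate j true).reverse
      = List.replicate j true ++ false :: true :: u.reverse := by
    simp [List.reverse_append]
  rw [h1, h2, stripAux_replicate, stripAux_replicate]
  simp [List.dropWhile]

lemma half_pow_inj {k m : ℕ} (h : ((1:ℝ)/2)^k = (1/2)^m) : k = m := by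
  rcases lt_trichotomy k m with hlt | he | hlt
  · have := pow_lt_pow_right_of_lt_one₀ (a := (1:ℝ)/2) (by norm_num) (by norm_num) hlt
    linarith
  · exact he
  · have := pow_lt_pow_right_of_lt_one₀ (a := (1:ℝ)/2) (by norm_num) (by norm_num) hlt
    linarith

open Classical in
/-- The invariant: vertices map to the normal form of their word; interior points of
`R`-edges and generic interior points of `L`-edges map to `none`; the special points
of `L`-edges at parameter `1 - 2⁻ᵏ` map to the vertex class of `wRᵏ`. -/
noncomputable def fInv : List Bool × Bool × I → Option (List Bool)
  | (w, true, α) =>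
      if (α : ℝ) = 0 then some (NF w)
      else if (α : ℝ) = 1 then some (NF (w ++ [true]))
      else none
  | (w, false, α) =>
      if h : ∃ k : ℕ, (α : ℝ) = 1 - (1/2)^k then
        some (NF (w ++ List.replicate h.choose true))
      else if (α : ℝ) = 1 then some (NF (w ++ [false])) else none

open Classical in
lemma fInv_true_def (w : List Bool) (α : I) :
    fInv (w, true, α) =
      if (α : ℝ) = 0 then some (NF w)
      else if (α : ℝ) = 1 then some (NF (w ++ [true]))
      else none := rfl

open Classical in
lemma fInv_false_def (w : List Bool) (α : I) :
    fInv (w, false, α) =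
      if h : ∃ k : ℕ, (α : ℝ) = 1 - (1/2)^k then
        some (NF (w ++ List.replicate h.choose true))
      else if (α : ℝ) = 1 then some (NF (w ++ [false])) else none := rfl

lemma choose_eq {x : ℝ} (h : ∃ k : ℕ, x = 1 - (1/2:ℝ)^k) {k : ℕ}
    (hk : x = 1 - (1/2:ℝ)^k) : h.choose = k := by
  have h1 := h.choose_spec
  exact half_pow_inj (by linarith)

lemma fInv_false_of_eq (w : List Bool) (α : I) (k : ℕ)
    (hk : (α : ℝ) = 1 - (1/2:ℝ)^k) :
    fInv (w, false, α) = some (NF (w ++ List.replicate k true)) := by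
  have hex : ∃ k : ℕ, (α : ℝ) = 1 - (1/2:ℝ)^k := ⟨k, hk⟩
  rw [fInv_false_def, dif_pos hex, choose_eq hex hk]

lemma not_exists_one : ¬ ∃ k : ℕ, (1:ℝ) = 1 - (1/2:ℝ)^k := by
  rintro ⟨k, hk⟩
  have : (0:ℝ) < (1/2:ℝ)^k := by positivity
  linarith

lemma fInv_false_one (w : List Bool) :
    fInv (w, false, 1) = some (NF (w ++ [false])) := by
  rw [fInv_false_def]
  have h1 : ((1 : I) : ℝ) = 1 := rfl
  rw [dif_neg (by rw [h1]; exact not_exists_one), if_pos h1]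

lemma fInv_false_zero (w : List Bool) : fInv (w, false, 0) = some (NF w) := by
  have h0 : ((0 : I) : ℝ) = 1 - (1/2:ℝ)^(0:ℕ) := by norm_num
  rw [fInv_false_of_eq w 0 0 h0]
  simp

lemma fInv_true_zero (w : List Bool) : fInv (w, true, 0) = some (NF w) := by
  rw [fInv_true_def, if_pos (show ((0:I):ℝ) = 0 from rfl)]

lemma fInv_true_one (w : List Bool) :
    fInv (w, true, 1) = some (NF (w ++ [true])) := by
  have h1 : ((1 : I) : ℝ) = 1 := rfl
  rw [fInv_true_def, if_neg (by rw [h1]; norm_num), if_pos h1]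

lemma fInv_rel : ∀ a b, Rel2 a b → fInv a = fInv b := by
  rintro a b (h | h)
  · cases h with
    | vertex w d d' =>
      cases d <;> cases d' <;>
        simp only [fInv_false_zero, fInv_true_zero]
    | edge w d d' =>
      cases d <;> cases d' <;>
        simp only [fInv_false_one, fInv_false_zero, fInv_true_one, fInv_true_zero]
  · cases h with
    | segL w α β hα hβ =>
      by_cases h : ∃ k : ℕ, (α : ℝ) = 1 - (1/2:ℝ)^k
      · obtain ⟨k, hk⟩ := h
        match k with
        | 0 =>
          have hα0 : (α : ℝ) = 0 := by rw [hk]; norm_num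
          have hβ0 : (β : ℝ) = 0 := by rw [hβ, hα0]; ring
          rw [fInv_false_of_eq w α 0 hk, fInv_true_def, if_pos hβ0]
          simp
        | 1 =>
          have hβ1 : (β : ℝ) = 1 := by rw [hβ, hk]; norm_num
          rw [fInv_false_of_eq w α 1 hk, fInv_true_def,
            if_neg (by rw [hβ1]; norm_num), if_pos hβ1]
          simp
        | (n+2) =>
          exfalso
          have hle : ((1:ℝ)/2)^(n+2) ≤ (1/2)^2 :=
            pow_le_pow_of_le_one (by norm_num) (by norm_num) (by omega)
          have : (3:ℝ)/4 ≤ (α : ℝ) := by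
            rw [hk]; norm_num at hle ⊢; linarith
          linarith
      · have hα1 : (α : ℝ) ≠ 1 := by intro h1; linarith
        have hβ0 : (β : ℝ) ≠ 0 := by
          intro h0
          exact h ⟨0, by rw [pow_zero]; linarith⟩
        have hβ1 : (β : ℝ) ≠ 1 := by
          intro h1
          exact h ⟨1, by rw [pow_one]; linarith⟩
        rw [fInv_false_def, dif_neg h, if_neg hα1, fInv_true_def,
          if_neg hβ0, if_neg hβ1]
    | segR w α β hα hβ =>
      by_cases h : ∃ k : ℕ, (α : ℝ) = 1 - (1/2:ℝ)^k
      · obtain ⟨k, hk⟩ := h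
        match k with
        | 0 =>
          exfalso
          rw [hk] at hα
          norm_num at hα
        | (m+1) =>
          have hβm : (β : ℝ) = 1 - (1/2:ℝ)^m := by
            rw [hβ, hk, pow_succ]; ring
          rw [fInv_false_of_eq w α (m+1) hk, fInv_false_of_eq _ β m hβm]
          congr 1
          rw [List.replicate_succ, List.append_assoc]
          rfl
      · by_cases hα1 : (α : ℝ) = 1
        · have hβ1 : (β : ℝ) = 1 := by rw [hβ, hα1]; ring
          have hβex : ¬ ∃ k : ℕ, (β : ℝ) = 1 - (1/2:ℝ)^k := by
            rw [hβ1]; exact not_exists_one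
          rw [fInv_false_def, dif_neg h, if_pos hα1,
            fInv_false_def, dif_neg hβex, if_pos hβ1]
          have := NF_key w 0
          simpa using this
        · have hβex : ¬ ∃ k : ℕ, (β : ℝ) = 1 - (1/2:ℝ)^k := by
            rintro ⟨k, hkk⟩
            exact h ⟨k+1, by rw [pow_succ]; rw [hβ] at hkk; linarith⟩
          have hβ1 : (β : ℝ) ≠ 1 := by
            intro h1; apply hα1; rw [hβ] at h1; linarith
          rw [fInv_false_def, dif_neg h, if_neg hα1,
            fInv_false_def, dif_neg hβex, if_neg hβ1]
    | ray u j α =>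
      rw [fInv_true_def, fInv_true_def]
      by_cases h0 : (α : ℝ) = 0
      · rw [if_pos h0, if_pos h0, NF_key]
      · rw [if_neg h0, if_neg h0]
        by_cases h1 : (α : ℝ) = 1
        · rw [if_pos h1, if_pos h1]
          have e1 : (u ++ [false] ++ List.replicate j true) ++ [true]
              = u ++ [false] ++ List.replicate (j+1) true := by
            rw [List.replicate_succ']; simp [List.append_assoc]
          have e2 : (u ++ [true, false] ++ List.replicate j true) ++ [true]
              = u ++ [true, false] ++ List.replicate (j+1) true := by
            rw [List.replicate_succ']; simp [List.append_assoc]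
          rw [e1, e2, NF_key]
        · rw [if_neg h1, if_neg h1]

theorem statement3 :
    Quot.mk Rel2 ([false], false, 1) ≠ Quot.mk Rel2 ([true, false], false, 1) ∧
    Quot.mk Rel2 ([false], false, 1) ≠ Quot.mk Rel2 ([true, true, false], false, 1) ∧
    Quot.mk Rel2 ([true, false], false, 1) ≠ Quot.mk Rel2 ([true, true, false], false, 1) := by
  refine ⟨?_, ?_, ?_⟩ <;> intro h <;>
  · have h2 : fInv ([false], false, 1) = fInv ([true, false], false, 1) ∨
        fInv ([false], false, 1) = fInv ([true, true, false], false, 1) ∨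
        fInv ([true, false], false, 1) = fInv ([true, true, false], false, 1) := by
      first
      | exact Or.inl (congrArg (Quot.lift fInv fInv_rel) h)
      | exact Or.inr (Or.inl (congrArg (Quot.lift fInv fInv_rel) h))
      | exact Or.inr (Or.inr (congrArg (Quot.lift fInv fInv_rel) h))
    rw [fInv_false_one, fInv_false_one, fInv_false_one] at h2
    revert h2
    decide
end

section
/- In the blowup model, parallel sections depend monotonically on their initial value: if 0 < x ≤ y, then s_x(t) ≤ s_y(t) for every t < min(t_max(x), t_max(y)), and t_max(y) ≤ t_max(x). In particular the blowup time t_max is an antitone function of the initial value on (0,∞). -/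
/-!
STATEMENT 4: In the blowup model, parallel sections depend monotonically on their
initial value: if `0 < x ≤ y`, then `s_x(t) ≤ s_y(t)` for every
`t < min (t_max x) (t_max y)`, and `t_max y ≤ t_max x`; in particular `t_max` is
antitone on `(0,∞)`.
-/

open scoped Classical

open Set in
/-- The blowup model: magnification bounds `1 < αmin ≤ αmax`, a set `Λ ⊆ (0,∞) × (0,∞)`
of singularities with distinct first coordinates which is finite in every box
`(0,T] × (0,H]`, and a magnification function `mag` taking values in `[αmin, αmax]`
on `Λ`. -/
structure BlowupModel where
  αmin : ℝ
  αmax : ℝ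
  one_lt_αmin : 1 < αmin
  αmin_le_αmax : αmin ≤ αmax
  Λ : Set (ℝ × ℝ)
  Λ_pos : ∀ p ∈ Λ, 0 < p.1 ∧ 0 < p.2
  Λ_inj : ∀ p ∈ Λ, ∀ q ∈ Λ, p.1 = q.1 → p = q
  Λ_locFin : ∀ T H : ℝ, (Λ ∩ Set.Ioc 0 T ×ˢ Set.Ioc 0 H).Finite
  mag : ℝ × ℝ → ℝ
  mag_mem : ∀ p ∈ Λ, αmin ≤ mag p ∧ mag p ≤ αmax

namespace BlowupModel

/-- The singularities that a section of current value `s` can hit after time `τ`. -/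
def eventSet (M : BlowupModel) (τ s : ℝ) : Set (ℝ × ℝ) :=
  {p | p ∈ M.Λ ∧ τ < p.1 ∧ p.2 < s}

/-- The singularity realizing the next event after time `τ` for a section of current
value `s` (the one with least time coordinate; junk value if there is none). -/
noncomputable def nextSing (M : BlowupModel) (τ s : ℝ) : ℝ × ℝ :=
  Classical.epsilon fun p => p ∈ M.eventSet τ s ∧ ∀ q ∈ M.eventSet τ s, p.1 ≤ q.1

/-- `evt M x n` is the pair (time of the `n`-th event, value of the section `s_x` just
after the `n`-th event), starting from `evt M x 0 = (0, x)`; at an event at the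
singularity `(t,b)` the value jumps from `s` to `b + mag (t,b) * (s - b)`.  If no
further event occurs, the pair is repeated forever. -/
noncomputable def evt (M : BlowupModel) (x : ℝ) : ℕ → ℝ × ℝ
  | 0 => (0, x)
  | n + 1 =>
    let τ := (evt M x n).1
    let s := (evt M x n).2
    if (M.eventSet τ s).Nonempty then
      ((M.nextSing τ s).1,
        (M.nextSing τ s).2 + M.mag (M.nextSing τ s) * (s - (M.nextSing τ s).2))
    else (τ, s)

/-- The blowup time of the section `s_x`: the supremum of the event times if there are
infinitely many events, and `∞` otherwise. -/
noncomputable def tmax (M : BlowupModel) (x : ℝ) : EReal :=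
  if ∀ n, (M.eventSet (M.evt x n).1 (M.evt x n).2).Nonempty then
    ⨆ n, ((M.evt x n).1 : EReal)
  else ⊤

/-- The value of the section `s_x` at time `t` (meaningful for `0 ≤ t < tmax x`): the
value just after the last event at time `≤ t`. -/
noncomputable def sx (M : BlowupModel) (x t : ℝ) : ℝ :=
  sSup ((fun n => (M.evt x n).2) '' {n | (M.evt x n).1 ≤ t})

end BlowupModel

namespace BlowupModel

variable (M : BlowupModel)

lemma nextSing_spec {τ s : ℝ} (h : (M.eventSet τ s).Nonempty) :
    M.nextSing τ s ∈ M.eventSet τ s ∧ ∀ q ∈ M.eventSet τ s, (M.nextSing τ s).1 ≤ q.1 := by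
  have hex : ∃ p, p ∈ M.eventSet τ s ∧ ∀ q ∈ M.eventSet τ s, p.1 ≤ q.1 := by
    obtain ⟨p0, hp0⟩ := h
    obtain ⟨hp0Λ, hp0τ, hp0s⟩ := hp0
    have hsub : M.eventSet τ s ∩ {q | q.1 ≤ p0.1} ⊆ M.Λ ∩ Set.Ioc 0 p0.1 ×ˢ Set.Ioc 0 s := by
      rintro q ⟨⟨hqΛ, hqτ, hqs⟩, hqle⟩
      exact ⟨hqΛ, ⟨(M.Λ_pos q hqΛ).1, hqle⟩, ⟨(M.Λ_pos q hqΛ).2, hqs.le⟩⟩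
    have hfin := (M.Λ_locFin p0.1 s).subset hsub
    obtain ⟨b, hb, hbmin⟩ := Set.exists_min_image _ Prod.fst hfin
      ⟨p0, ⟨hp0Λ, hp0τ, hp0s⟩, by exact le_refl p0.1⟩
    refine ⟨b, hb.1, fun q hq => ?_⟩
    by_cases hq1 : q.1 ≤ p0.1
    · exact hbmin q ⟨hq, hq1⟩
    · exact le_trans (hbmin p0 ⟨⟨hp0Λ, hp0τ, hp0s⟩, by exact le_refl p0.1⟩) (le_of_not_ge hq1)
  exact Classical.epsilon_spec hex

lemma evt_succ (x : ℝ) (n : ℕ) :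
    M.evt x (n+1) =
      if (M.eventSet (M.evt x n).1 (M.evt x n).2).Nonempty then
        ((M.nextSing (M.evt x n).1 (M.evt x n).2).1,
         (M.nextSing (M.evt x n).1 (M.evt x n).2).2 +
           M.mag (M.nextSing (M.evt x n).1 (M.evt x n).2) *
             ((M.evt x n).2 - (M.nextSing (M.evt x n).1 (M.evt x n).2).2))
      else M.evt x n := rfl

lemma evt_jump {x : ℝ} {n : ℕ} (h : (M.eventSet (M.evt x n).1 (M.evt x n).2).Nonempty) :
    M.evt x (n+1) =
      ((M.nextSing (M.evt x n).1 (M.evt x n).2).1,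
       (M.nextSing (M.evt x n).1 (M.evt x n).2).2 +
         M.mag (M.nextSing (M.evt x n).1 (M.evt x n).2) *
           ((M.evt x n).2 - (M.nextSing (M.evt x n).1 (M.evt x n).2).2)) := by
  rw [evt_succ, if_pos h]

lemma evt_stop {x : ℝ} {n : ℕ} (h : ¬(M.eventSet (M.evt x n).1 (M.evt x n).2).Nonempty) :
    M.evt x (n+1) = M.evt x n := by
  rw [evt_succ, if_neg h]

lemma fst_mono (x : ℝ) : Monotone fun n => (M.evt x n).1 := by
  apply monotone_nat_of_le_succ
  intro n
  by_cases h : (M.eventSet (M.evt x n).1 (M.evt x n).2).Nonempty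
  · rw [M.evt_jump h]; exact le_of_lt (M.nextSing_spec h).1.2.1
  · rw [M.evt_stop h]

lemma snd_mono (x : ℝ) : Monotone fun n => (M.evt x n).2 := by
  apply monotone_nat_of_le_succ
  intro n
  by_cases h : (M.eventSet (M.evt x n).1 (M.evt x n).2).Nonempty
  · obtain ⟨⟨hΛ, hτ, hs⟩, -⟩ := M.nextSing_spec h
    have hα := M.mag_mem _ hΛ
    have h1 : (1:ℝ) ≤ M.mag (M.nextSing (M.evt x n).1 (M.evt x n).2) :=
      le_trans M.one_lt_αmin.le hα.1
    rw [M.evt_jump h]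
    show (M.evt x n).2 ≤ _ + _ * _
    nlinarith [hs, h1]
  · rw [M.evt_stop h]

lemma evt_stop_forever {x : ℝ} {n : ℕ}
    (h : ¬(M.eventSet (M.evt x n).1 (M.evt x n).2).Nonempty)
    {m : ℕ} (hm : n ≤ m) : M.evt x m = M.evt x n := by
  obtain ⟨k, rfl⟩ := Nat.exists_eq_add_of_le hm
  induction k with
  | zero => rfl
  | succ k ih =>
    have : n + (k+1) = (n+k) + 1 := rfl
    rw [this, evt_succ, ih (by omega), if_neg h]

lemma fst_strictMono {x : ℝ}
    (hall : ∀ n, (M.eventSet (M.evt x n).1 (M.evt x n).2).Nonempty) :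
    StrictMono fun n => (M.evt x n).1 := by
  apply strictMono_nat_of_lt_succ
  intro n
  rw [M.evt_jump (hall n)]
  exact (M.nextSing_spec (hall n)).1.2.1

lemma tmax_eq_sup {x : ℝ} (h : ∀ n, (M.eventSet (M.evt x n).1 (M.evt x n).2).Nonempty) :
    M.tmax x = ⨆ n, ((M.evt x n).1 : EReal) := if_pos h

lemma tmax_eq_top {x : ℝ} (h : ¬ ∀ n, (M.eventSet (M.evt x n).1 (M.evt x n).2).Nonempty) :
    M.tmax x = ⊤ := if_neg h

/-- Main comparison invariant. -/
lemma main {x y : ℝ} (hxy : x ≤ y) :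
    ∀ n j : ℕ,
      ((M.evt x n).1 ≤ (M.evt y j).1 ∨
        ∀ q ∈ M.eventSet (M.evt y j).1 (M.evt y j).2, (M.evt x n).1 < q.1) →
      (M.evt x n).2 ≤ (M.evt y j).2 := by
  intro n
  induction n with
  | zero =>
    intro j _
    exact le_trans hxy (M.snd_mono y (Nat.zero_le j))
  | succ n ih =>
    intro j hD
    by_cases hne : (M.eventSet (M.evt x n).1 (M.evt x n).2).Nonempty
    · -- x jumps at p
      obtain ⟨hpE, hpmin⟩ := M.nextSing_spec hne
      set p := M.nextSing (M.evt x n).1 (M.evt x n).2 with hp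
      obtain ⟨hpΛ, hpτ, hps⟩ := hpE
      have hevt := M.evt_jump hne
      have hfst : (M.evt x (n+1)).1 = p.1 := by rw [hevt]
      have hsnd : (M.evt x (n+1)).2 = p.2 + M.mag p * ((M.evt x n).2 - p.2) := by rw [hevt]
      have hαp := M.mag_mem p hpΛ
      have hα1 : (1:ℝ) ≤ M.mag p := le_trans M.one_lt_αmin.le hαp.1
      by_cases hle : p.1 ≤ (M.evt y j).1
      · -- y's last state before time p.1
        have ht0 : (0:ℝ) < p.1 := (M.Λ_pos p hpΛ).1
        set P : ℕ → Prop := fun i => (M.evt y i).1 < p.1 with hPdef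
        have hP0 : P 0 := ht0
        have hbnd : ∀ i, P i → i < j := by
          intro i hi
          by_contra hij
          exact absurd (le_trans hle (M.fst_mono y (by omega))) (not_le.mpr hi)
        set m := Nat.findGreatest P j with hmdef
        have hPm : P m := Nat.findGreatest_spec (Nat.zero_le j) hP0
        have hmax : ∀ i, P i → i ≤ m := by
          intro i hi
          by_contra hmi
          exact Nat.findGreatest_is_greatest (by omega) (le_of_lt (hbnd i hi)) hi
        -- D(n, m)
        have hDnm : (M.evt x n).1 ≤ (M.evt y m).1 ∨
            ∀ q ∈ M.eventSet (M.evt y m).1 (M.evt y m).2, (M.evt x n).1 < q.1 := by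
          by_cases h1 : (M.evt x n).1 ≤ (M.evt y m).1
          · exact Or.inl h1
          · refine Or.inr fun q hq => ?_
            by_contra hq1
            push_neg at hq1
            have hneY : (M.eventSet (M.evt y m).1 (M.evt y m).2).Nonempty := ⟨q, hq⟩
            obtain ⟨hqE', hqmin'⟩ := M.nextSing_spec hneY
            have : (M.evt y (m+1)).1 < p.1 := by
              rw [M.evt_jump hneY]
              exact lt_of_le_of_lt (le_trans (hqmin' q hq) hq1) hpτ
            exact absurd (hmax (m+1) this) (by omega)
        have hnm : (M.evt x n).2 ≤ (M.evt y m).2 := ih m hDnm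
        -- p is in y's event set at state m
        have hpEy : p ∈ M.eventSet (M.evt y m).1 (M.evt y m).2 :=
          ⟨hpΛ, hPm, lt_of_lt_of_le hps hnm⟩
        have hneY : (M.eventSet (M.evt y m).1 (M.evt y m).2).Nonempty := ⟨p, hpEy⟩
        obtain ⟨hqE, hqmin⟩ := M.nextSing_spec hneY
        set q := M.nextSing (M.evt y m).1 (M.evt y m).2 with hq
        have hq1 : q.1 ≤ p.1 := hqmin p hpEy
        have hq1' : q.1 = p.1 := by
          rcases lt_or_eq_of_le hq1 with h | h
          · exfalso
            have : (M.evt y (m+1)).1 < p.1 := by rw [M.evt_jump hneY]; exact h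
            exact absurd (hmax (m+1) this) (by omega)
          · exact h
        have hqp : q = p := M.Λ_inj q hqE.1 p hpΛ hq1'
        have hyjump := M.evt_jump hneY
        have hystep : (M.evt y (m+1)).2 = p.2 + M.mag p * ((M.evt y m).2 - p.2) := by
          rw [hyjump]
          show q.2 + M.mag q * ((M.evt y m).2 - q.2) = _
          rw [hqp]
        have hmj : m + 1 ≤ j := hbnd m hPm
        have hstep : (M.evt x (n+1)).2 ≤ (M.evt y (m+1)).2 := by
          rw [hsnd, hystep]
          have h2 : p.2 ≤ (M.evt x n).2 := hps.le
          nlinarith [hnm, hα1]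
        exact le_trans hstep (M.snd_mono y hmj)
      · -- τ^y_j < p.1 : hD must be the second disjunct, and it is contradictory
        exfalso
        rcases hD with h1 | h2
        · rw [hfst] at h1; exact hle h1
        · have hDnj : (M.evt x n).1 ≤ (M.evt y j).1 ∨
              ∀ q ∈ M.eventSet (M.evt y j).1 (M.evt y j).2, (M.evt x n).1 < q.1 := by
            by_cases h1 : (M.evt x n).1 ≤ (M.evt y j).1
            · exact Or.inl h1
            · exact Or.inr fun q hq => lt_trans hpτ (by rw [hfst] at h2; exact h2 q hq)
          have hnj : (M.evt x n).2 ≤ (M.evt y j).2 := ih j hDnj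
          have hpEy : p ∈ M.eventSet (M.evt y j).1 (M.evt y j).2 :=
            ⟨hpΛ, not_le.mp hle, lt_of_lt_of_le hps hnj⟩
          have := h2 p hpEy
          rw [hfst] at this
          exact lt_irrefl _ this
    · have hst := M.evt_stop hne
      rw [hst] at hD ⊢
      exact ih j hD

/-- Either y eventually stops no later than t, or the indices of events at time ≤ t
are bounded. -/
lemma index_bound {y : ℝ} {t : ℝ} (ht : (t : EReal) < M.tmax y) :
    (∃ i0, ¬(M.eventSet (M.evt y i0).1 (M.evt y i0).2).Nonempty ∧ (M.evt y i0).1 ≤ t)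
    ∨ ∃ N, ∀ i, (M.evt y i).1 ≤ t → i ≤ N := by
  by_cases hall : ∀ i, (M.eventSet (M.evt y i).1 (M.evt y i).2).Nonempty
  · right
    rw [M.tmax_eq_sup hall, lt_iSup_iff] at ht
    obtain ⟨i, hi⟩ := ht
    have hi' : t < (M.evt y i).1 := EReal.coe_lt_coe_iff.mp hi
    refine ⟨i, fun i' hi'' => ?_⟩
    by_contra h
    exact absurd (le_trans (M.fst_mono y (by omega : i ≤ i')) hi'') (not_le.mpr hi')
  · push_neg at hall
    obtain ⟨i0, hi0e⟩ := hall
    have hi0 : ¬(M.eventSet (M.evt y i0).1 (M.evt y i0).2).Nonempty := by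
      rw [hi0e]; exact Set.not_nonempty_empty
    by_cases hle : (M.evt y i0).1 ≤ t
    · exact Or.inl ⟨i0, hi0, hle⟩
    · right
      refine ⟨i0, fun i hi => ?_⟩
      by_contra h
      rw [M.evt_stop_forever hi0 (by omega : i0 ≤ i)] at hi
      exact hle hi

/-- Given an x-state with time ≤ t < tmax y, there is a dominating y-state at time ≤ t. -/
lemma exists_dom {x y : ℝ} (hxy : x ≤ y) (n : ℕ) (t : ℝ) (h0 : 0 ≤ t)
    (hτ : (M.evt x n).1 ≤ t) (ht : (t : EReal) < M.tmax y) :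
    ∃ j, (M.evt y j).1 ≤ t ∧ (M.evt x n).2 ≤ (M.evt y j).2 := by
  rcases M.index_bound ht with ⟨i0, hempty, hle⟩ | ⟨N, hN⟩
  · refine ⟨i0, hle, M.main hxy n i0 (Or.inr fun q hq => absurd ⟨q, hq⟩ hempty)⟩
  · set P : ℕ → Prop := fun i => (M.evt y i).1 ≤ t with hPdef
    have hP0 : P 0 := h0
    set j := Nat.findGreatest P N with hjdef
    have hPj : P j := Nat.findGreatest_spec (Nat.zero_le N) hP0
    refine ⟨j, hPj, M.main hxy n j ?_⟩
    by_cases h1 : (M.evt x n).1 ≤ (M.evt y j).1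
    · exact Or.inl h1
    · refine Or.inr fun q hq => ?_
      by_contra hq1
      push_neg at hq1
      have hneY : (M.eventSet (M.evt y j).1 (M.evt y j).2).Nonempty := ⟨q, hq⟩
      obtain ⟨hqE', hqmin'⟩ := M.nextSing_spec hneY
      have hPj1 : P (j+1) := by
        show (M.evt y (j+1)).1 ≤ t
        rw [M.evt_jump hneY]
        exact le_trans (le_trans (hqmin' q hq) hq1) hτ
      exact Nat.findGreatest_is_greatest (by omega) (hN (j+1) hPj1) hPj1

/-- Bound on y-values at times ≤ t for t < tmax y. -/
lemma y_bound {y : ℝ} {t : ℝ} (ht : (t : EReal) < M.tmax y) :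
    ∃ B, ∀ i, (M.evt y i).1 ≤ t → (M.evt y i).2 ≤ B := by
  rcases M.index_bound ht with ⟨i0, hempty, _⟩ | ⟨N, hN⟩
  · refine ⟨(M.evt y i0).2, fun i _ => ?_⟩
    rcases le_or_gt i i0 with h | h
    · exact M.snd_mono y h
    · rw [M.evt_stop_forever hempty (le_of_lt h)]
  · exact ⟨(M.evt y N).2, fun i hi => M.snd_mono y (hN i hi)⟩


lemma tmax_ne_bot (M : BlowupModel) (x : ℝ) : M.tmax x ≠ ⊥ := by
  by_cases h : ∀ n, (M.eventSet (M.evt x n).1 (M.evt x n).2).Nonempty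
  · rw [M.tmax_eq_sup h]
    intro hb
    have h0 := le_iSup (fun n => ((M.evt x n).1 : EReal)) 0
    rw [hb] at h0
    exact absurd (le_bot_iff.mp h0) (EReal.coe_ne_bot _)
  · rw [M.tmax_eq_top h]
    simp

lemma fst_le_toReal (M : BlowupModel) {x : ℝ}
    (hall : ∀ n, (M.eventSet (M.evt x n).1 (M.evt x n).2).Nonempty)
    (htop : M.tmax x ≠ ⊤) (n : ℕ) : (M.evt x n).1 ≤ (M.tmax x).toReal := by
  have hcoe : (((M.tmax x).toReal : ℝ) : EReal) = M.tmax x :=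
    EReal.coe_toReal htop (M.tmax_ne_bot x)
  have h1 : ((M.evt x n).1 : EReal) ≤ M.tmax x := by
    rw [M.tmax_eq_sup hall]
    exact le_iSup (fun n => ((M.evt x n).1 : EReal)) n
  rw [← hcoe] at h1
  exact EReal.coe_le_coe_iff.mp h1

/-- If x never stops and tmax x is finite, the values of x are unbounded. -/
lemma values_unbounded (M : BlowupModel) {x : ℝ}
    (hall : ∀ n, (M.eventSet (M.evt x n).1 (M.evt x n).2).Nonempty)
    (htop : M.tmax x ≠ ⊤) : ¬ ∃ B, ∀ n, (M.evt x n).2 ≤ B := by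
  rintro ⟨B, hB⟩
  set T := (M.tmax x).toReal with hT
  have hTle : ∀ n, (M.evt x n).1 ≤ T := M.fst_le_toReal hall htop
  set f : ℕ → ℝ × ℝ := fun n => M.nextSing (M.evt x n).1 (M.evt x n).2 with hf
  have hfst : ∀ n, (M.evt x (n+1)).1 = (f n).1 := fun n => by rw [M.evt_jump (hall n)]
  have hmem : ∀ n, f n ∈ M.Λ ∩ Set.Ioc 0 T ×ˢ Set.Ioc 0 B := by
    intro n
    obtain ⟨hΛ, hτ, hs⟩ := (M.nextSing_spec (hall n)).1
    refine ⟨hΛ, ⟨(M.Λ_pos _ hΛ).1, ?_⟩, ⟨(M.Λ_pos _ hΛ).2, le_trans hs.le (hB n)⟩⟩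
    rw [← hfst n]; exact hTle (n+1)
  have hinj : Function.Injective f := by
    intro a b hab
    have hsm := M.fst_strictMono hall
    have h1 : (M.evt x (a+1)).1 = (M.evt x (b+1)).1 := by
      rw [hfst a, hfst b, hab]
    have := hsm.injective h1
    omega
  exact (M.Λ_locFin T B).not_infinite (Set.infinite_of_injective_forall_mem hinj hmem)

end BlowupModel

theorem statement4 (M : BlowupModel) (x y : ℝ) (hx : 0 < x) (hxy : x ≤ y) :
    (∀ t : ℝ, 0 ≤ t → (t : EReal) < min (M.tmax x) (M.tmax y) → M.sx x t ≤ M.sx y t) ∧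
      M.tmax y ≤ M.tmax x := by
  constructor
  · intro t ht0 htlt
    have hty : (t : EReal) < M.tmax y := lt_of_lt_of_le htlt (min_le_right _ _)
    obtain ⟨B, hB⟩ := M.y_bound hty
    have hbdd : BddAbove ((fun n => (M.evt y n).2) '' {n | (M.evt y n).1 ≤ t}) := by
      refine ⟨B, ?_⟩
      rintro _ ⟨i, hi, rfl⟩
      exact hB i hi
    apply csSup_le
    · exact ⟨x, 0, ht0, rfl⟩
    · rintro a ⟨n, hn, rfl⟩
      obtain ⟨j, hj1, hj2⟩ := M.exists_dom hxy n t ht0 hn hty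
      exact le_trans hj2 (le_csSup hbdd ⟨j, hj1, rfl⟩)
  · by_cases hallx : ∀ n, (M.eventSet (M.evt x n).1 (M.evt x n).2).Nonempty
    · by_contra h
      have hlt : M.tmax x < M.tmax y := not_le.mp h
      have htop : M.tmax x ≠ ⊤ := ne_top_of_lt hlt
      set T := (M.tmax x).toReal with hT
      have hcoe : ((T : ℝ) : EReal) = M.tmax x := EReal.coe_toReal htop (M.tmax_ne_bot x)
      have hTle : ∀ n, (M.evt x n).1 ≤ T := M.fst_le_toReal hallx htop
      have hTy : (T : EReal) < M.tmax y := by rw [hcoe]; exact hlt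
      obtain ⟨B, hB⟩ := M.y_bound hTy
      apply M.values_unbounded hallx htop
      refine ⟨B, fun n => ?_⟩
      have h0n : (0:ℝ) ≤ (M.evt x n).1 := M.fst_mono x (Nat.zero_le n)
      have hne : ((M.evt x n).1 : EReal) < M.tmax y :=
        lt_of_le_of_lt (by rw [← hcoe]; exact EReal.coe_le_coe_iff.mpr (hTle n)) hlt
      obtain ⟨j, hj1, hj2⟩ := M.exists_dom hxy n (M.evt x n).1 h0n le_rfl hne
      exact le_trans hj2 (hB j (le_trans hj1 (hTle n)))
    · rw [M.tmax_eq_top hallx]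
      exact le_top
end

section
/- Let α_min > 1 be a real number, and let (α_j), (b_j), (x_j), (y_j) (j ∈ ℕ) be sequences of reals satisfying, for every j: α_j ≥ α_min, 0 ≤ b_j < x_j < y_j, x_{j+1} = b_j + α_j·(x_j − b_j), and y_{j+1} ≥ b_j + α_j·(y_j − b_j). If the relative gap (y_j − x_j)/x_j is bounded above uniformly in j, then b_j/x_j → 0 as j → ∞. (This is the key step in Case 2 of the paper's injectivity proposition: if the ratio of two parallel sections stays bounded, then the relative heights of the magnifying singularities encountered must tend to zero.) -/
/-!
STATEMENT 7: If sequences `(α_j), (b_j), (x_j), (y_j)` satisfy `α_j ≥ αmin > 1`,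
`0 ≤ b_j < x_j < y_j`, `x_{j+1} = b_j + α_j (x_j − b_j)` and
`y_{j+1} ≥ b_j + α_j (y_j − b_j)`, and the relative gap `(y_j − x_j)/x_j` is bounded
above uniformly in `j`, then `b_j / x_j → 0` as `j → ∞`.
-/

theorem statement7 (αmin : ℝ) (hαmin : 1 < αmin) (α b x y : ℕ → ℝ)
    (hα : ∀ j, αmin ≤ α j)
    (hb : ∀ j, 0 ≤ b j) (hbx : ∀ j, b j < x j) (hxy : ∀ j, x j < y j)
    (hxrec : ∀ j, x (j + 1) = b j + α j * (x j - b j))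
    (hyrec : ∀ j, y (j + 1) ≥ b j + α j * (y j - b j))
    (hgap : ∃ G : ℝ, ∀ j, (y j - x j) / x j ≤ G) :
    Filter.Tendsto (fun j => b j / x j) Filter.atTop (nhds 0) := by
  obtain ⟨G, hG⟩ := hgap
  have hαmin0 : (0:ℝ) < αmin := lt_trans one_pos hαmin
  set c : ℝ := (αmin - 1) / αmin with hcdef
  have hc1 : c * αmin = αmin - 1 := by rw [hcdef]; field_simp
  have hcpos : 0 < c := div_pos (by linarith) hαmin0
  have h1c : 0 ≤ 1 - c := by nlinarith
  have hx : ∀ j, 0 < x j := fun j => lt_of_le_of_lt (hb j) (hbx j)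
  set g : ℕ → ℝ := fun j => (y j - x j) / x j with hgdef
  have hgpos : ∀ j, 0 < g j := fun j => div_pos (by linarith [hxy j]) (hx j)
  have key : ∀ j, (1 + c * (b j / x j)) * g j ≤ g (j + 1) := by
    intro j
    have hxj := hx j
    have hx' := hx (j + 1)
    have hαj : 1 < α j := lt_of_lt_of_le hαmin (hα j)
    have hyx : 0 < y j - x j := by linarith [hxy j]
    have hA : 1 - α j + c * α j ≤ 0 := by nlinarith [hα j]
    have step1 : α j * (y j - x j) ≤ y (j + 1) - x (j + 1) := by
      have := hyrec j
      rw [hxrec j]; nlinarith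
    have step2 : (x j + c * b j) * x (j + 1) ≤ α j * (x j * x j) := by
      rw [hxrec j]
      nlinarith [mul_nonneg (mul_nonneg (hb j) hxj.le) (neg_nonneg.2 hA),
        mul_nonneg (mul_nonneg hcpos.le (mul_nonneg (hb j) (hb j))) (by linarith : (0:ℝ) ≤ α j - 1)]
    have e : (1 + c * (b j / x j)) * g j = ((x j + c * b j) * (y j - x j)) / (x j * x j) := by
      simp only [hgdef]
      field_simp
    rw [e, hgdef]
    rw [div_le_div_iff₀ (by positivity) hx']
    nlinarith [mul_le_mul_of_nonneg_right step2 hyx.le,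
      mul_le_mul_of_nonneg_right step1 (mul_pos hxj hxj).le]
  have hstep : ∀ j, g j ≤ g (j + 1) := by
    intro j
    have h := key j
    have hr : 0 ≤ b j / x j := div_nonneg (hb j) (hx j).le
    nlinarith [hgpos j, mul_nonneg (mul_nonneg hcpos.le hr) (hgpos j).le]
  have hmono : Monotone g := monotone_nat_of_le_succ hstep
  rw [Metric.tendsto_atTop]
  intro ε hε
  by_contra hcon
  push_neg at hcon
  have hfreq : ∀ N, ∃ n ≥ N, ε ≤ b n / x n := by
    intro N
    obtain ⟨n, hn, hd⟩ := hcon N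
    refine ⟨n, hn, ?_⟩
    have hr : 0 ≤ b n / x n := div_nonneg (hb n) (hx n).le
    rwa [Real.dist_eq, sub_zero, abs_of_nonneg hr] at hd
  set t : ℝ := 1 + c * ε with htdef
  have ht : 1 < t := by nlinarith
  have hgrow : ∀ m : ℕ, ∃ j, t ^ m * g 0 ≤ g j := by
    intro m
    induction m with
    | zero => exact ⟨0, by simp⟩
    | succ m ih =>
      obtain ⟨j, hj⟩ := ih
      obtain ⟨n, hnj, hn⟩ := hfreq j
      refine ⟨n + 1, ?_⟩
      have h1 : g j ≤ g n := hmono hnj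
      have h2 := key n
      have h3 : t * g n ≤ (1 + c * (b n / x n)) * g n := by
        nlinarith [hgpos n, mul_le_mul_of_nonneg_left hn hcpos.le]
      have h4 : (0:ℝ) ≤ t ^ m := by positivity
      calc t ^ (m + 1) * g 0 = t * (t ^ m * g 0) := by ring
        _ ≤ t * g j := by nlinarith [hgpos 0]
        _ ≤ t * g n := by nlinarith
        _ ≤ g (n + 1) := le_trans h3 h2
  obtain ⟨m, hm⟩ := pow_unbounded_of_one_lt (G / g 0) ht
  obtain ⟨j, hj⟩ := hgrow m
  have hGj : g j ≤ G := hG j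
  have hg0 := hgpos 0
  have : G < t ^ m * g 0 := by
    rw [div_lt_iff₀ hg0] at hm
    exact hm
  linarith
end

section
/- In the blowup model, suppose Λ has uniform density κ for some κ > 0. Then t_max(x) is finite for every x > 0, and the map x ↦ t_max(x) is a surjection from (0,∞) onto (0,∞). (This is the abstract content of the paper's proposition that the blowup-time map t_max : π^{-1}(γ(0)) → (0,∞) is surjective.) -/
/-!
STATEMENT 8: In the blowup model, if `Λ` has uniform density `κ > 0`, then `t_max x`
is finite for every `x > 0`, and `x ↦ t_max x` maps `(0,∞)` onto `(0,∞)`.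
-/

open scoped Classical

/-- `Λ` has uniform density `κ`: for every `ε > 0` there is `A_ε > 0` such that every
box `(t, t+w] × (0, h]` with `t ≥ 0` and area `w·h ≥ A_ε` contains between
`(κ−ε)·w·h` and `(κ+ε)·w·h` singularities. -/
def BlowupModel.UniformDensity (M : BlowupModel) (κ : ℝ) : Prop :=
  ∀ ε : ℝ, 0 < ε → ∃ A : ℝ, 0 < A ∧
    ∀ t : ℝ, 0 ≤ t → ∀ w h : ℝ, 0 < w → 0 < h → A ≤ w * h →
      (κ - ε) * w * h ≤ ((M.Λ ∩ Set.Ioc t (t + w) ×ˢ Set.Ioc 0 h).ncard : ℝ) ∧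
        ((M.Λ ∩ Set.Ioc t (t + w) ×ˢ Set.Ioc 0 h).ncard : ℝ) ≤ (κ + ε) * w * h

/-!
Uniform density gives `D > 0` such that a section of value `s` meets, within time `D / s`,
a singularity of height at most `s / 2`; the jump there multiplies the value by at least
`λ = (αmin + 1) / 2`. Iterating, all events after one of value `s` happen within time `E / s`,
where `E = D + E / λ`. Hence `t_max x ≤ E / x` is finite and tends to `0` at infinity. It tends to infinity as
`x → 0`: the first event of `s_x` needs a singularity below height `x`, and before any given
time only finitely many singularities lie below height `1`. Comparing the sections of nearby initial values `x ≤ y`, which differ by at most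
`αmax ^ k * (y - x)` after `k` events of `s_y`, shows that `t_max` is upper semicontinuous from
the left and lower semicontinuous from the right; these one-sided estimates suffice for an
intermediate value argument at the supremum of `{x | T ≤ t_max x}`.
-/

open Set Filter Topology

theorem exists_eq_of_semicontinuousWithinAt {f : ℝ → ℝ} {T : ℝ}
    (h_zero : ∀ᶠ z in 𝓝[>] 0, T ≤ f z) (h_top : ∀ᶠ z in atTop, f z < T)
    (husc : ∀ x, 0 < x → UpperSemicontinuousWithinAt f (Iic x) x)
    (hlsc : ∀ x, 0 < x → LowerSemicontinuousWithinAt f (Ici x) x) :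
    ∃ x, 0 < x ∧ f x = T := by
  set S := {z | 0 < z ∧ T ≤ f z}
  obtain ⟨a, haT, ha⟩ := (h_zero.and self_mem_nhdsWithin).exists
  obtain ⟨b, hb⟩ := eventually_atTop.1 h_top
  have hS : IsLUB S (sSup S) :=
    isLUB_csSup ⟨a, ha, haT⟩ ⟨b, fun z hz => not_lt.1 fun hbz => (hb z hbz.le).not_ge hz.2⟩
  have hpos : 0 < sSup S := ha.trans_le (hS.1 ⟨ha, haT⟩)
  refine ⟨sSup S, hpos, le_antisymm ?_ ?_⟩
  · by_contra! hlt
    obtain ⟨y, hyT, hy⟩ := ((hlsc _ hpos T hlt).filter_mono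
      (nhdsWithin_mono _ Ioi_subset_Ici_self) |>.and self_mem_nhdsWithin).exists
    exact (hS.1 ⟨hpos.trans hy, hyT.le⟩).not_gt hy
  · by_contra! hlt
    obtain ⟨y, hyT, hyS⟩ :=
      ((husc _ hpos T hlt).and_frequently (hS.frequently_mem ⟨a, ha, haT⟩)).exists
    exact hyT.not_ge hyS.2

namespace BlowupModel

variable {M : BlowupModel}

lemma one_lt_αmax : 1 < M.αmax := M.one_lt_αmin.trans_le M.αmin_le_αmax

lemma exists_min_eventSet {τ s : ℝ} (h : (M.eventSet τ s).Nonempty) :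
    ∃ p ∈ M.eventSet τ s, ∀ q ∈ M.eventSet τ s, p.1 ≤ q.1 := by
  obtain ⟨p₀, hp₀⟩ := h
  have hfin : (M.eventSet τ s ∩ {q | q.1 ≤ p₀.1}).Finite :=
    (M.Λ_locFin p₀.1 s).subset fun q ⟨⟨hqΛ, _, hqs⟩, hq⟩ =>
      ⟨hqΛ, ⟨(M.Λ_pos q hqΛ).1, hq⟩, (M.Λ_pos q hqΛ).2, hqs.le⟩
  obtain ⟨p, ⟨hp, hpp₀⟩, hmin⟩ := exists_min_image _ Prod.fst hfin ⟨p₀, hp₀, le_refl p₀.1⟩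
  refine ⟨p, hp, fun q hq => ?_⟩
  rcases le_total q.1 p₀.1 with hq₀ | hq₀
  · exact hmin q ⟨hq, hq₀⟩
  · exact hpp₀.trans hq₀

/-- The singularity met at the `(n + 1)`-st event of `s_x`. -/
noncomputable def hit (M : BlowupModel) (x : ℝ) (n : ℕ) : ℝ × ℝ :=
  M.nextSing (M.evt x n).1 (M.evt x n).2

lemma hit_spec {x : ℝ} {n : ℕ} (h : (M.eventSet (M.evt x n).1 (M.evt x n).2).Nonempty) :
    M.hit x n ∈ M.eventSet (M.evt x n).1 (M.evt x n).2 ∧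
      ∀ q ∈ M.eventSet (M.evt x n).1 (M.evt x n).2, (M.hit x n).1 ≤ q.1 :=
  Classical.epsilon_spec (exists_min_eventSet h)

lemma evt_succ_of_nonempty {x : ℝ} {n : ℕ}
    (h : (M.eventSet (M.evt x n).1 (M.evt x n).2).Nonempty) :
    M.evt x (n + 1) = ((M.hit x n).1,
      (M.hit x n).2 + M.mag (M.hit x n) * ((M.evt x n).2 - (M.hit x n).2)) := by
  rw [evt, if_pos h]
  rfl

lemma zero_le_evt_fst_and_le_evt_snd (x : ℝ) (n : ℕ) :
    0 ≤ (M.evt x n).1 ∧ x ≤ (M.evt x n).2 := by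
  induction n with
  | zero => exact ⟨le_rfl, le_rfl⟩
  | succ n ih =>
    by_cases h : (M.eventSet (M.evt x n).1 (M.evt x n).2).Nonempty
    · obtain ⟨⟨hΛ, -, hs⟩, -⟩ := hit_spec h
      rw [evt_succ_of_nonempty h]
      have := (M.mag_mem _ hΛ).1
      have := M.one_lt_αmin
      exact ⟨(M.Λ_pos _ hΛ).1.le, by nlinarith⟩
    · rw [evt, if_neg h]
      exact ih

lemma evt_snd_pos {x : ℝ} (hx : 0 < x) (n : ℕ) : 0 < (M.evt x n).2 :=
  hx.trans_le (zero_le_evt_fst_and_le_evt_snd x n).2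

def SingularityWithin (M : BlowupModel) (D : ℝ) : Prop :=
  ∀ τ, 0 ≤ τ → ∀ s, 0 < s → ∃ p ∈ M.Λ, τ < p.1 ∧ p.1 ≤ τ + D / s ∧ p.2 ≤ s / 2

lemma exists_singularityWithin {κ : ℝ} (hκ : 0 < κ) (hud : M.UniformDensity κ) :
    ∃ D, M.SingularityWithin D := by
  obtain ⟨A, hA, hbox⟩ := hud (κ / 2) (half_pos hκ)
  refine ⟨2 * A, fun τ hτ s hs => ?_⟩
  have harea : 2 * A / s * (s / 2) = A := by field_simp
  obtain ⟨hcount, -⟩ := hbox τ hτ (2 * A / s) (s / 2) (by positivity) (by positivity) harea.ge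
  have hne : (M.Λ ∩ Ioc τ (τ + 2 * A / s) ×ˢ Ioc 0 (s / 2)).ncard ≠ 0 := by
    rw [mul_assoc, harea] at hcount
    have : 0 < (κ - κ / 2) * A := by nlinarith
    exact_mod_cast (this.trans_le hcount).ne'
  obtain ⟨p, hpΛ, ⟨hp, hpD⟩, -, hp2⟩ := nonempty_of_ncard_ne_zero hne
  exact ⟨p, hpΛ, hp, hpD, hp2⟩

lemma SingularityWithin.pos {D : ℝ} (hD : M.SingularityWithin D) : 0 < D := by
  obtain ⟨p, -, hp, hpD, -⟩ := hD 0 le_rfl 1 one_pos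
  simp only [zero_add, div_one] at hpD
  exact hp.trans_le hpD

/-- `E = timeConst D` solves `E = D + E / λ` for the growth factor `λ = (αmin + 1) / 2`
of `evt_stalls_or_grows`. -/
noncomputable def timeConst (M : BlowupModel) (D : ℝ) : ℝ := D * (M.αmin + 1) / (M.αmin - 1)

lemma add_timeConst_div (D : ℝ) :
    D + M.timeConst D / ((M.αmin + 1) / 2) = M.timeConst D := by
  have := M.one_lt_αmin
  have : M.αmin - 1 ≠ 0 := by linarith
  have : M.αmin + 1 ≠ 0 := by linarith
  simp only [timeConst]
  field_simp
  ring

lemma le_timeConst {D : ℝ} (hD : 0 ≤ D) : D ≤ M.timeConst D := by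
  have := M.one_lt_αmin
  rw [timeConst, le_div_iff₀ (by linarith)]
  nlinarith

section

variable {D x : ℝ} (hD : M.SingularityWithin D) (hx : 0 < x)
include hD hx

lemma eventSet_evt_nonempty (n : ℕ) : (M.eventSet (M.evt x n).1 (M.evt x n).2).Nonempty := by
  obtain ⟨p, hpΛ, hp, -, hp2⟩ :=
    hD _ (zero_le_evt_fst_and_le_evt_snd x n).1 _ (evt_snd_pos hx n)
  exact ⟨p, hpΛ, hp, hp2.trans_lt (half_lt_self (evt_snd_pos hx n))⟩

lemma hit_mem_eventSet (n : ℕ) : M.hit x n ∈ M.eventSet (M.evt x n).1 (M.evt x n).2 :=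
  (hit_spec (eventSet_evt_nonempty hD hx n)).1

lemma hit_fst_le {n : ℕ} {q : ℝ × ℝ} (hq : q ∈ M.eventSet (M.evt x n).1 (M.evt x n).2) :
    (M.hit x n).1 ≤ q.1 :=
  (hit_spec (eventSet_evt_nonempty hD hx n)).2 q hq

lemma evt_succ_fst (n : ℕ) : (M.evt x (n + 1)).1 = (M.hit x n).1 := by
  rw [evt_succ_of_nonempty (eventSet_evt_nonempty hD hx n)]

lemma evt_succ_snd (n : ℕ) : (M.evt x (n + 1)).2 =
    (M.hit x n).2 + M.mag (M.hit x n) * ((M.evt x n).2 - (M.hit x n).2) := by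
  rw [evt_succ_of_nonempty (eventSet_evt_nonempty hD hx n)]

lemma evt_fst_lt_succ (n : ℕ) : (M.evt x n).1 < (M.evt x (n + 1)).1 := by
  rw [evt_succ_fst hD hx]
  exact (hit_mem_eventSet hD hx n).2.1

lemma evt_fst_strictMono : StrictMono fun n => (M.evt x n).1 :=
  strictMono_nat_of_lt_succ (evt_fst_lt_succ hD hx)

lemma evt_snd_monotone : Monotone fun n => (M.evt x n).2 :=
  monotone_nat_of_le_succ fun n => by
    obtain ⟨hΛ, -, hs⟩ := hit_mem_eventSet hD hx n
    rw [evt_succ_snd hD hx]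
    nlinarith [(M.mag_mem _ hΛ).1, M.one_lt_αmin]

lemma hit_eq_of_mem_eventSet {n : ℕ} {p : ℝ × ℝ}
    (hp : p ∈ M.eventSet (M.evt x n).1 (M.evt x n).2) (hle : p.1 ≤ (M.evt x (n + 1)).1) :
    M.hit x n = p :=
  M.Λ_inj _ (hit_mem_eventSet hD hx n).1 p hp.1 <|
    (hit_fst_le hD hx hp).antisymm (by rwa [← evt_succ_fst hD hx])

lemma hit_injective : Function.Injective (M.hit x) := fun m n h => by
  have : (M.evt x (m + 1)).1 = (M.evt x (n + 1)).1 := by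
    rw [evt_succ_fst hD hx, h, evt_succ_fst hD hx]
  have := (evt_fst_strictMono hD hx).injective this
  omega

lemma hit_mem_box {n : ℕ} {T H : ℝ} (hT : (M.evt x (n + 1)).1 ≤ T) (hH : (M.evt x n).2 ≤ H) :
    M.hit x n ∈ M.Λ ∩ Ioc 0 T ×ˢ Ioc 0 H := by
  obtain ⟨hΛ, -, hs⟩ := hit_mem_eventSet hD hx n
  rw [evt_succ_fst hD hx] at hT
  exact ⟨hΛ, ⟨(M.Λ_pos _ hΛ).1, hT⟩, (M.Λ_pos _ hΛ).2, hs.le.trans hH⟩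

lemma le_ncard_of_hit_mem {B : Set (ℝ × ℝ)} (hB : B.Finite) {m : ℕ}
    (h : ∀ i < m, M.hit x i ∈ B) : m ≤ B.ncard := by
  have := ncard_le_ncard_of_injOn (M.hit x) (s := ↑(Finset.range m))
    (fun i hi => h i (Finset.mem_range.1 hi)) (hit_injective hD hx).injOn hB
  rwa [ncard_coe_finset, Finset.card_range] at this

lemma evt_stalls_or_grows (n : ℕ) :
    (∀ k, (M.evt x k).1 ≤ (M.evt x n).1 + D / (M.evt x n).2) ∨
      ∃ m, n < m ∧ (M.evt x m).1 ≤ (M.evt x n).1 + D / (M.evt x n).2 ∧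
        (M.αmin + 1) / 2 * (M.evt x n).2 ≤ (M.evt x m).2 := by
  have hs : 0 < (M.evt x n).2 := evt_snd_pos hx n
  obtain ⟨p, hpΛ, hp, hpD, hp2⟩ := hD _ (zero_le_evt_fst_and_le_evt_snd x n).1 _ hs
  by_cases hall : ∀ k, (M.evt x k).1 < p.1
  · exact .inl fun k => (hall k).le.trans hpD
  push Not at hall
  -- the first event at or after time `p.1` is the jump at `p`
  obtain ⟨m, hm, hmin⟩ : ∃ m, p.1 ≤ (M.evt x m).1 ∧ ∀ k < m, (M.evt x k).1 < p.1 :=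
    ⟨Nat.find hall, Nat.find_spec hall, fun k hk => not_le.1 (Nat.find_min hall hk)⟩
  have hnm : n < m := (evt_fst_strictMono hD hx).lt_iff_lt.1 (hp.trans_le hm)
  obtain ⟨m, rfl⟩ : ∃ m', m = m' + 1 := Nat.exists_eq_succ_of_ne_zero (by omega)
  have hsm : (M.evt x n).2 ≤ (M.evt x m).2 := evt_snd_monotone hD hx (by omega)
  have hhit : M.hit x m = p :=
    hit_eq_of_mem_eventSet hD hx ⟨hpΛ, hmin m (by omega), by linarith⟩ hm
  refine .inr ⟨m + 1, hnm, ?_, ?_⟩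
  · rwa [evt_succ_fst hD hx, hhit]
  · rw [evt_succ_snd hD hx, hhit]
    have hmag := (M.mag_mem p hpΛ).1
    have := M.one_lt_αmin
    nlinarith [mul_le_mul_of_nonneg_right hmag (by linarith : 0 ≤ (M.evt x m).2 - p.2),
      mul_le_mul_of_nonneg_left hp2 (by linarith : 0 ≤ M.αmin - 1)]

lemma evt_fst_le_add (n k : ℕ) :
    (M.evt x k).1 ≤ (M.evt x n).1 + M.timeConst D / (M.evt x n).2 := by
  induction hd : k - n using Nat.strong_induction_on generalizing n with
  | _ d ih =>
    have hs : 0 < (M.evt x n).2 := evt_snd_pos hx n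
    have hDE : D / (M.evt x n).2 ≤ M.timeConst D / (M.evt x n).2 :=
      div_le_div_of_nonneg_right (le_timeConst hD.pos.le) hs.le
    rcases evt_stalls_or_grows hD hx n with hstall | ⟨m, hnm, hm, hgrow⟩
    · linarith [hstall k]
    rcases le_or_gt k m with hkm | hmk
    · linarith [(evt_fst_strictMono hD hx).monotone hkm]
    have hgrowth : 0 < (M.αmin + 1) / 2 := by linarith [M.one_lt_αmin]
    have hE : 0 ≤ M.timeConst D := hD.pos.le.trans (le_timeConst hD.pos.le)
    calc (M.evt x k).1 ≤ (M.evt x m).1 + M.timeConst D / (M.evt x m).2 := ih _ (by omega) m rfl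
      _ ≤ (M.evt x n).1 + D / (M.evt x n).2 +
          M.timeConst D / ((M.αmin + 1) / 2 * (M.evt x n).2) := by gcongr
      _ = (M.evt x n).1 + M.timeConst D / (M.evt x n).2 := by
          conv_rhs => rw [← add_timeConst_div D, add_div, div_div]
          ring

lemma evt_fst_le_div (k : ℕ) : (M.evt x k).1 ≤ M.timeConst D / x := by
  simpa [evt] using evt_fst_le_add hD hx 0 k

lemma exists_le_evt_snd (R : ℝ) : ∃ n, R ≤ (M.evt x n).2 := by
  by_contra! h
  set B := M.Λ ∩ Ioc 0 (M.timeConst D / x) ×ˢ Ioc 0 R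
  have := le_ncard_of_hit_mem hD hx (M.Λ_locFin _ _) (B := B) (m := B.ncard + 1) fun i _ =>
    hit_mem_box hD hx (evt_fst_le_div hD hx (i + 1)) (h i).le
  omega

end

noncomputable def tmaxReal (M : BlowupModel) (x : ℝ) : ℝ := ⨆ n, (M.evt x n).1

section

variable {D x : ℝ} (hD : M.SingularityWithin D) (hx : 0 < x)
include hD hx

lemma bddAbove_range_evt_fst : BddAbove (range fun n => (M.evt x n).1) :=
  ⟨M.timeConst D / x, by rintro _ ⟨n, rfl⟩; exact evt_fst_le_div hD hx n⟩

lemma evt_fst_le_tmaxReal (n : ℕ) : (M.evt x n).1 ≤ M.tmaxReal x :=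
  le_ciSup (bddAbove_range_evt_fst hD hx) n

lemma tmaxReal_nonneg : 0 ≤ M.tmaxReal x :=
  evt_fst_le_tmaxReal hD hx 0

lemma tmaxReal_le_add (n : ℕ) :
    M.tmaxReal x ≤ (M.evt x n).1 + M.timeConst D / (M.evt x n).2 :=
  ciSup_le (evt_fst_le_add hD hx n)

lemma tmaxReal_le_div : M.tmaxReal x ≤ M.timeConst D / x :=
  ciSup_le (evt_fst_le_div hD hx)

lemma tmax_eq : M.tmax x = M.tmaxReal x := by
  rw [tmax, if_pos (eventSet_evt_nonempty hD hx), tmaxReal]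
  exact (Monotone.map_ciSup_of_continuousAt continuous_coe_real_ereal.continuousAt
    EReal.coe_strictMono.monotone (bddAbove_range_evt_fst hD hx)).symm

end

/-- Every event of `s_x` is also one of `s_y`, and each event of `s_y` multiplies the gap
`s_y - s_x` by at most `αmax`. -/
lemma exists_evt_coupling {D x y : ℝ} (hD : M.SingularityWithin D) (hx : 0 < x) (hxy : x ≤ y)
    (k : ℕ) : ∃ j ≤ k, (M.evt x j).1 ≤ (M.evt y k).1 ∧ (M.evt y k).1 < (M.evt x (j + 1)).1 ∧
      (M.evt x j).2 ≤ (M.evt y k).2 ∧ (M.evt y k).2 - (M.evt x j).2 ≤ M.αmax ^ k * (y - x) := by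
  have hy := hx.trans_le hxy
  induction k with
  | zero => exact ⟨0, le_rfl, le_rfl, evt_fst_lt_succ hD hx 0, hxy, by simp [evt]⟩
  | succ k ih =>
    obtain ⟨j, hjk, htj, htj', hsj, hgap⟩ := ih
    obtain ⟨hpΛ, hp, hps⟩ := hit_mem_eventSet hD hy k
    obtain ⟨hqΛ, -, hqs⟩ := hit_mem_eventSet hD hx j
    have hmag := M.mag_mem _ hpΛ
    have hpq : (M.hit y k).1 ≤ (M.hit x j).1 :=
      hit_fst_le hD hy ⟨hqΛ, by rwa [← evt_succ_fst hD hx], hqs.trans_le hsj⟩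
    have hgap' : M.mag (M.hit y k) * ((M.evt y k).2 - (M.evt x j).2) ≤
        M.αmax ^ (k + 1) * (y - x) := by
      rw [pow_succ', mul_assoc]
      exact mul_le_mul hmag.2 hgap (sub_nonneg.2 hsj) (zero_lt_one.trans one_lt_αmax).le
    have hmag1 : 1 ≤ M.mag (M.hit y k) := (M.one_lt_αmin.trans_le hmag.1).le
    rw [evt_succ_fst hD hy, evt_succ_snd hD hy]
    rcases lt_or_ge (M.hit y k).2 (M.evt x j).2 with hshared | hsingle
    · have hqp : M.hit x j = M.hit y k := hit_eq_of_mem_eventSet hD hx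
        ⟨hpΛ, htj.trans_lt hp, hshared⟩ (by rwa [evt_succ_fst hD hx])
      refine ⟨j + 1, by omega, ?_, ?_, ?_, ?_⟩
      · rw [evt_succ_fst hD hx, hqp]
      · rw [← hqp, ← evt_succ_fst hD hx]
        exact evt_fst_lt_succ hD hx _
      · rw [evt_succ_snd hD hx, hqp]
        nlinarith
      · rw [evt_succ_snd hD hx, hqp]
        linarith
    · refine ⟨j, by omega, htj.trans hp.le, ?_, by nlinarith, by nlinarith⟩
      rw [evt_succ_fst hD hx]
      refine hpq.lt_of_ne fun h => ?_
      rw [M.Λ_inj _ hpΛ _ hqΛ h] at hsingle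
      linarith

lemma eventually_tmaxReal_le_add {D x : ℝ} (hD : M.SingularityWithin D) (hx : 0 < x) {ε : ℝ}
    (hε : 0 < ε) : ∀ᶠ y in 𝓝[≤] x, M.tmaxReal y ≤ M.tmaxReal x + ε := by
  obtain ⟨n, hn⟩ := exists_le_evt_snd hD hx (M.timeConst D / ε + 1)
  have hclose : ∀ᶠ y in 𝓝 x, M.αmax ^ n * (x - y) < 1 :=
    (show Continuous fun y => M.αmax ^ n * (x - y) by fun_prop).tendsto x |>.eventually
      (gt_mem_nhds (by simp))
  filter_upwards [nhdsWithin_le_nhds (lt_mem_nhds hx), nhdsWithin_le_nhds hclose,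
    self_mem_nhdsWithin] with y hy hgap (hyx : y ≤ x)
  obtain ⟨j, -, htj, -, -, hsj⟩ := exists_evt_coupling hD hy hyx n
  have hsj' : M.timeConst D / ε ≤ (M.evt y j).2 := by linarith
  have hE : M.timeConst D / (M.evt y j).2 ≤ ε := by
    rw [div_le_iff₀ hε] at hsj'
    rw [div_le_iff₀ (evt_snd_pos hy j)]
    linarith
  calc M.tmaxReal y ≤ (M.evt y j).1 + M.timeConst D / (M.evt y j).2 := tmaxReal_le_add hD hy j
    _ ≤ M.tmaxReal x + ε := add_le_add (htj.trans (evt_fst_le_tmaxReal hD hx n)) hE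

lemma upperSemicontinuousWithinAt_tmaxReal {D x : ℝ} (hD : M.SingularityWithin D)
    (hx : 0 < x) : UpperSemicontinuousWithinAt M.tmaxReal (Iic x) x := fun c hc =>
  (eventually_tmaxReal_le_add hD hx (half_pos (sub_pos.2 hc))).mono fun _ hy => by linarith

lemma eventually_evt_fst_le_tmaxReal {D x : ℝ} (hD : M.SingularityWithin D) (hx : 0 < x)
    (n : ℕ) : ∀ᶠ y in 𝓝[≥] x, (M.evt x n).1 ≤ M.tmaxReal y := by
  set B := M.Λ ∩ Ioc 0 (M.evt x n).1 ×ˢ Ioc 0 ((M.evt x n).2 + 1)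
  have hclose : ∀ᶠ y in 𝓝 x, M.αmax ^ B.ncard * (y - x) < 1 :=
    (show Continuous fun y => M.αmax ^ B.ncard * (y - x) by fun_prop).tendsto x |>.eventually
      (gt_mem_nhds (by simp))
  filter_upwards [nhdsWithin_le_nhds hclose, self_mem_nhdsWithin] with y hgap (hxy : x ≤ y)
  have hy := hx.trans_le hxy
  by_contra! hlt
  -- otherwise the first `B.ncard + 1` singularities met by `s_y` are distinct points of `B`
  have hearly k : (M.evt y k).1 < (M.evt x n).1 := (evt_fst_le_tmaxReal hD hy k).trans_lt hlt
  have := le_ncard_of_hit_mem hD hy (M.Λ_locFin _ _) (B := B) (m := B.ncard + 1) fun i hi => by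
    obtain ⟨j, -, htj, -, -, hsj⟩ := exists_evt_coupling hD hx hxy i
    have hjn : j ≤ n := ((evt_fst_strictMono hD hx).lt_iff_lt.1 (htj.trans_lt (hearly i))).le
    have hpow : M.αmax ^ i * (y - x) ≤ M.αmax ^ B.ncard * (y - x) :=
      mul_le_mul_of_nonneg_right (pow_le_pow_right₀ one_lt_αmax.le (by omega)) (sub_nonneg.2 hxy)
    exact hit_mem_box hD hy (H := (M.evt x n).2 + 1) (hearly _).le
      (by linarith [evt_snd_monotone hD hx hjn])
  omega

lemma lowerSemicontinuousWithinAt_tmaxReal {D x : ℝ} (hD : M.SingularityWithin D)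
    (hx : 0 < x) : LowerSemicontinuousWithinAt M.tmaxReal (Ici x) x := fun c hc => by
  obtain ⟨n, hn⟩ := exists_lt_of_lt_ciSup hc
  exact (eventually_evt_fst_le_tmaxReal hD hx n).mono fun _ hy => hn.trans_le hy

lemma tendsto_tmaxReal_atTop {D : ℝ} (hD : M.SingularityWithin D) :
    Tendsto M.tmaxReal atTop (𝓝 0) := by
  refine tendsto_of_tendsto_of_tendsto_of_le_of_le' (h := fun x => M.timeConst D / x)
    tendsto_const_nhds (tendsto_const_nhds.div_atTop tendsto_id) ?_ ?_
  · filter_upwards [eventually_gt_atTop 0] with x hx using tmaxReal_nonneg hD hx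
  · filter_upwards [eventually_gt_atTop 0] with x hx using tmaxReal_le_div hD hx

lemma tendsto_tmaxReal_nhdsGT_zero {D : ℝ} (hD : M.SingularityWithin D) :
    Tendsto M.tmaxReal (𝓝[>] 0) atTop := by
  refine tendsto_atTop.2 fun T => ?_
  set B := M.Λ ∩ Ioc 0 T ×ˢ Ioc 0 1
  have hB : ∀ᶠ z in 𝓝 (0 : ℝ), z < 1 ∧ ∀ p ∈ B, z < p.2 :=
    (gt_mem_nhds one_pos).and <|
      (M.Λ_locFin T 1).eventually_all.2 fun p hp => gt_mem_nhds (M.Λ_pos p hp.1).2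
  filter_upwards [nhdsWithin_le_nhds hB, self_mem_nhdsWithin] with z ⟨hz1, hzB⟩ (hz : 0 < z)
  obtain ⟨hΛ, -, hs⟩ := hit_mem_eventSet hD hz 0
  have hT : T < (M.hit z 0).1 := not_le.1 fun hle =>
    lt_asymm hs (hzB _ ⟨hΛ, ⟨(M.Λ_pos _ hΛ).1, hle⟩, (M.Λ_pos _ hΛ).2, (hs.trans hz1).le⟩)
  exact (hT.trans_eq (evt_succ_fst hD hz 0).symm).le.trans (evt_fst_le_tmaxReal hD hz 1)

end BlowupModel

theorem statement8 (M : BlowupModel) (κ : ℝ) (hκ : 0 < κ) (hud : M.UniformDensity κ) :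
    (∀ x : ℝ, 0 < x → M.tmax x < ⊤) ∧
      ∀ T : ℝ, 0 < T → ∃ x : ℝ, 0 < x ∧ M.tmax x = (T : EReal) := by
  obtain ⟨D, hD⟩ := BlowupModel.exists_singularityWithin hκ hud
  refine ⟨fun x hx => ?_, fun T hT => ?_⟩
  · rw [BlowupModel.tmax_eq hD hx]
    exact EReal.coe_lt_top _
  · obtain ⟨x, hx, hxT⟩ := exists_eq_of_semicontinuousWithinAt
      ((BlowupModel.tendsto_tmaxReal_nhdsGT_zero hD).eventually_ge_atTop T)
      ((BlowupModel.tendsto_tmaxReal_atTop hD).eventually (gt_mem_nhds hT))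
      (fun _ hx => BlowupModel.upperSemicontinuousWithinAt_tmaxReal hD hx)
      (fun _ hx => BlowupModel.lowerSemicontinuousWithinAt_tmaxReal hD hx)
    exact ⟨x, hx, by rw [BlowupModel.tmax_eq hD hx, hxT]⟩
end
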